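/- arXiv:math/9810188 — 7 statements merged into one kernel-verified Lean document; each statement's English description precedes it below -/
import Mathlib

section
/- Every finitely generated residually finite group is Hopfian; that is, if G is a finitely generated group such that for every nontrivial g ∈ G there is a finite group Q and a homomorphism φ : G → Q with φ(g) ≠ 1, then every surjective group homomorphism G → G is injective. -/
/-- Every finitely generated residually finite group is Hopfian. -/
theorem fg_residually_finite_implies_hopfian
    (G : Type) [Group G] (hfg : Group.FG G)
    (hres : ∀ g : G, g ≠ 1 → ∃ (Q : Type) (_ : Group Q) (_ : Finite Q)
      (φ : G →* Q), φ g ≠ 1) :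
    ∀ ψ : G →* G, Function.Surjective ψ → Function.Injective ψ := by
  intro ψ hsurj
  rw [← MonoidHom.ker_eq_bot_iff, eq_bot_iff]
  intro g hg
  by_contra hg1
  obtain ⟨Q, _, _, φ, hφ⟩ := hres g hg1
  -- Hom(G, Q) is finite
  obtain ⟨S, hS⟩ := hfg.out
  have hfin : Finite (G →* Q) := by
    refine Finite.of_injective (fun f => (fun s : S => f s)) ?_
    intro f₁ f₂ h
    refine MonoidHom.eq_of_eqOn_dense hS ?_
    intro x hx
    exact congrFun h ⟨x, hx⟩
  -- precomposition with ψ is injective, hence surjective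
  have hinj : Function.Injective (fun f : G →* Q => f.comp ψ) := by
    intro f₁ f₂ h
    ext x
    obtain ⟨y, rfl⟩ := hsurj x
    exact DFunLike.congr_fun h y
  obtain ⟨φ', hφ'⟩ := (Finite.injective_iff_surjective.mp hinj) φ
  have : φ g = φ' (ψ g) := by rw [← hφ']; rfl
  rw [hg, map_one] at this
  exact hφ this
end

section
/- In the Baumslag–Solitar group BS(2,3) = ⟨a, t ∣ t⁻¹a²t = a³⟩, the element [a, t⁻¹at] = a·(t⁻¹at)·a⁻¹·(t⁻¹a⁻¹t) is nontrivial and lies in the kernel of the surjective endomorphism sending a ↦ a², t ↦ t. -/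
open Multiplicative Subgroup

/-- The single defining relator `t⁻¹ a² t a⁻³` of the Baumslag–Solitar group
`BS(2,3) = ⟨a, t ∣ t⁻¹a²t = a³⟩`, with `a` indexed by `0` and `t` by `1`. -/
def BSrel : Set (FreeGroup (Fin 2)) :=
  {(FreeGroup.of 1)⁻¹ * (FreeGroup.of 0) ^ 2 * FreeGroup.of 1 * ((FreeGroup.of 0) ^ 3)⁻¹}

/-- The Baumslag–Solitar group `BS(2,3)`. -/
def BS : Type := PresentedGroup BSrel

instance : Group BS := by unfold BS; infer_instance

/-- The generator `a` of `BS(2,3)`. -/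
def BSa : BS := PresentedGroup.of 0

/-- The generator `t` of `BS(2,3)`. -/
def BSt : BS := PresentedGroup.of 1

/- ### Auxiliary: HNN extension model of BS(2,3) -/

abbrev Mz := Multiplicative ℤ

lemma mem_zpowers_ofAdd_iff {c : ℤ} {x : Mz} :
    x ∈ Subgroup.zpowers (ofAdd c) ↔ c ∣ toAdd x := by
  constructor
  · rintro ⟨k, rfl⟩
    exact ⟨k, by simp [mul_comm]⟩
  · rintro ⟨k, hk⟩
    refine ⟨k, ?_⟩
    show ofAdd c ^ k = x
    rw [← ofAdd_zsmul, smul_eq_mul, ← ofAdd_toAdd x, hk, mul_comm]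

def Bsub : Subgroup Mz := Subgroup.zpowers (ofAdd (2:ℤ))
def Asub : Subgroup Mz := Subgroup.zpowers (ofAdd (3:ℤ))

def e23 : Bsub ≃* Asub where
  toFun x := ⟨ofAdd (toAdd x.1 / 2 * 3), by
    obtain ⟨k, hk⟩ := mem_zpowers_ofAdd_iff.1 x.2
    exact mem_zpowers_ofAdd_iff.2 ⟨k, by simp [hk, mul_comm]⟩⟩
  invFun x := ⟨ofAdd (toAdd x.1 / 3 * 2), by
    obtain ⟨k, hk⟩ := mem_zpowers_ofAdd_iff.1 x.2
    exact mem_zpowers_ofAdd_iff.2 ⟨k, by simp [hk, mul_comm]⟩⟩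
  left_inv x := by
    obtain ⟨k, hk⟩ := mem_zpowers_ofAdd_iff.1 x.2
    apply Subtype.ext
    show ofAdd (toAdd (ofAdd (toAdd x.1 / 2 * 3)) / 3 * 2) = x.1
    rw [toAdd_ofAdd]
    conv_rhs => rw [← ofAdd_toAdd x.1]
    congr 1
    omega
  right_inv x := by
    obtain ⟨k, hk⟩ := mem_zpowers_ofAdd_iff.1 x.2
    apply Subtype.ext
    show ofAdd (toAdd (ofAdd (toAdd x.1 / 3 * 2)) / 2 * 3) = x.1
    rw [toAdd_ofAdd]
    conv_rhs => rw [← ofAdd_toAdd x.1]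
    congr 1
    omega
  map_mul' x y := by
    obtain ⟨k, hk⟩ := mem_zpowers_ofAdd_iff.1 x.2
    obtain ⟨l, hl⟩ := mem_zpowers_ofAdd_iff.1 y.2
    apply Subtype.ext
    have h : toAdd (x.1 * y.1) = toAdd x.1 + toAdd y.1 := by simp
    show ofAdd (toAdd (x.1*y.1) / 2 * 3) = ofAdd (toAdd x.1 / 2 * 3) * ofAdd (toAdd y.1 / 2 * 3)
    rw [← ofAdd_add]
    congr 1
    rw [h, hk, hl]
    omega

/-- The isomorphism `3ℤ ≃ 2ℤ` (whose inverse sends `2 ↦ 3`). -/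
def φh : Asub ≃* Bsub := e23.symm

abbrev Hgrp := HNNExtension Mz Asub Bsub φh

open HNNExtension

lemma mem_Bsub : ofAdd (2:ℤ) ∈ Bsub := mem_zpowers_ofAdd_iff.2 ⟨1, by norm_num⟩

lemma φh_symm_two : (φh.symm ⟨ofAdd (2:ℤ), mem_Bsub⟩ : Mz) = ofAdd (3:ℤ) := by
  show (e23 ⟨ofAdd (2:ℤ), mem_Bsub⟩ : Mz) = ofAdd (3:ℤ)
  show ofAdd (toAdd (ofAdd (2:ℤ)) / 2 * 3) = ofAdd (3:ℤ)
  norm_num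

/-- The key relation in the HNN extension: `t⁻¹ a² t = a³`. -/
lemma hnn_rel : (HNNExtension.t : Hgrp)⁻¹ * HNNExtension.of (ofAdd (2:ℤ)) * HNNExtension.t
    = HNNExtension.of (ofAdd (3:ℤ)) := by
  have h := (equiv_symm_eq_conj (φ := φh) ⟨ofAdd (2:ℤ), mem_Bsub⟩).symm
  rwa [φh_symm_two] at h

lemma ofAdd_one_sq : (ofAdd (1:ℤ))^2 = ofAdd (2:ℤ) := by
  rw [pow_two, ← ofAdd_add]; norm_num
lemma ofAdd_one_cube : (ofAdd (1:ℤ))^3 = ofAdd (3:ℤ) := by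
  rw [pow_succ, pow_two, ← ofAdd_add, ← ofAdd_add]; norm_num

lemma of_pow_two : (HNNExtension.of (ofAdd (1:ℤ)) : Hgrp)^2 = HNNExtension.of (ofAdd (2:ℤ)) := by
  rw [← map_pow, ofAdd_one_sq]
lemma of_pow_three : (HNNExtension.of (ofAdd (1:ℤ)) : Hgrp)^3 = HNNExtension.of (ofAdd (3:ℤ)) := by
  rw [← map_pow, ofAdd_one_cube]

lemma hrelmap : ∀ r ∈ BSrel,
    FreeGroup.lift (![HNNExtension.of (ofAdd (1:ℤ)), (HNNExtension.t : Hgrp)]) r = 1 := by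
  rintro r hr
  rw [BSrel, Set.mem_singleton_iff] at hr
  subst hr
  simp only [map_mul, map_inv, map_pow, FreeGroup.lift_apply_of, Matrix.cons_val_zero,
    Matrix.cons_val_one, Matrix.head_cons]
  rw [of_pow_two, of_pow_three, ← hnn_rel]
  group

/-- The homomorphism `BS →* Hgrp`. -/
def fBH : BS →* Hgrp := PresentedGroup.toGroup hrelmap

lemma fBH_a : fBH BSa = HNNExtension.of (ofAdd (1:ℤ)) := by
  show PresentedGroup.toGroup hrelmap (PresentedGroup.of 0) = _
  rw [PresentedGroup.toGroup.of]
  rfl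

lemma fBH_t : fBH BSt = (HNNExtension.t : Hgrp) := by
  show PresentedGroup.toGroup hrelmap (PresentedGroup.of 1) = _
  rw [PresentedGroup.toGroup.of]
  rfl

/-- The reduced word for the image of the commutator. -/
def wred : HNNExtension.NormalWord.ReducedWord Mz Asub Bsub where
  head := ofAdd (1:ℤ)
  toList := [(-1, ofAdd (1:ℤ)), (1, ofAdd (-1:ℤ)), (-1, ofAdd (-1:ℤ)), (1, (1:Mz))]
  chain := by
    refine List.isChain_cons_cons.2 ⟨?_, List.isChain_cons_cons.2 ⟨?_, List.isChain_cons_cons.2 ⟨?_,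
      List.isChain_singleton _⟩⟩⟩
    · intro h
      exfalso
      rw [toSubgroup_neg_one] at h
      obtain ⟨k, hk⟩ := mem_zpowers_ofAdd_iff.1 h
      simp at hk
      omega
    · intro h
      exfalso
      rw [toSubgroup_one] at h
      obtain ⟨k, hk⟩ := mem_zpowers_ofAdd_iff.1 h
      simp at hk
      omega
    · intro h
      exfalso
      rw [toSubgroup_neg_one] at h
      obtain ⟨k, hk⟩ := mem_zpowers_ofAdd_iff.1 h
      simp at hk
      omega

lemma wred_prod :
    wred.prod φh = HNNExtension.of (ofAdd (1:ℤ)) *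
      (HNNExtension.t⁻¹ * HNNExtension.of (ofAdd (1:ℤ)) * HNNExtension.t) *
      (HNNExtension.of (ofAdd (1:ℤ)))⁻¹ *
      (HNNExtension.t⁻¹ * (HNNExtension.of (ofAdd (1:ℤ)))⁻¹ * HNNExtension.t) := by
  rw [HNNExtension.NormalWord.ReducedWord.prod]
  show HNNExtension.of (ofAdd (1:ℤ)) *
    ([HNNExtension.t ^ ((-1 : ℤˣ) : ℤ) * HNNExtension.of (ofAdd (1:ℤ)),
      HNNExtension.t ^ ((1 : ℤˣ) : ℤ) * HNNExtension.of (ofAdd (-1:ℤ)),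
      HNNExtension.t ^ ((-1 : ℤˣ) : ℤ) * HNNExtension.of (ofAdd (-1:ℤ)),
      HNNExtension.t ^ ((1 : ℤˣ) : ℤ) * HNNExtension.of (1:Mz)]).prod = _
  have h1 : ((1 : ℤˣ) : ℤ) = 1 := rfl
  have h2 : ((-1 : ℤˣ) : ℤ) = -1 := rfl
  have h3 : (ofAdd (-1:ℤ)) = (ofAdd (1:ℤ))⁻¹ := rfl
  have h4 : HNNExtension.of (1:Mz) = (1 : Hgrp) := map_one _
  have h5 : HNNExtension.of ((ofAdd (1:ℤ))⁻¹) = (HNNExtension.of (ofAdd (1:ℤ)) : Hgrp)⁻¹ :=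
    map_inv _ _
  rw [h1, h2, h3, h4, h5]
  simp [zpow_neg, zpow_one, List.prod_cons, List.prod_nil, mul_one, mul_assoc]

/-- The key relation in `BS`. -/
lemma BS_rel : BSt⁻¹ * BSa^2 * BSt = BSa^3 := by
  rw [← mul_inv_eq_one (b := BSa^3)]
  have h : ((PresentedGroup.mk BSrel ((FreeGroup.of 1)⁻¹ * (FreeGroup.of 0) ^ 2 *
      FreeGroup.of 1 * ((FreeGroup.of 0) ^ 3)⁻¹)) : PresentedGroup BSrel) = 1 := by
    apply (QuotientGroup.eq_one_iff _).2
    exact Subgroup.subset_normalClosure (s := BSrel) rfl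
  calc BSt⁻¹ * BSa^2 * BSt * (BSa^3)⁻¹
      = PresentedGroup.mk BSrel ((FreeGroup.of 1)⁻¹ * (FreeGroup.of 0) ^ 2 *
        FreeGroup.of 1 * ((FreeGroup.of 0) ^ 3)⁻¹) := by
        simp only [map_mul, map_inv, map_pow]
        rfl
    _ = 1 := h

lemma BS_rel_inv : BSt⁻¹ * (BSa^2)⁻¹ * BSt = (BSa^3)⁻¹ := by
  rw [← BS_rel]; group

/-- The element `[a, t⁻¹at] = a (t⁻¹at) a⁻¹ (t⁻¹a⁻¹t)` of `BS(2,3)` is nontrivial,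
and it lies in the kernel of any endomorphism with `a ↦ a²`, `t ↦ t`;
moreover such a surjective endomorphism exists. -/
theorem BS23_commutator_nontrivial_in_kernel :
    BSa * (BSt⁻¹ * BSa * BSt) * BSa⁻¹ * (BSt⁻¹ * BSa⁻¹ * BSt) ≠ 1 ∧
    (∃ φ : BS →* BS, φ BSa = BSa ^ 2 ∧ φ BSt = BSt ∧ Function.Surjective φ) ∧
    ∀ φ : BS →* BS, φ BSa = BSa ^ 2 → φ BSt = BSt →
      φ (BSa * (BSt⁻¹ * BSa * BSt) * BSa⁻¹ * (BSt⁻¹ * BSa⁻¹ * BSt)) = 1 := by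
  refine ⟨?_, ?_, ?_⟩
  · -- nontriviality, via Britton's lemma in the HNN extension
    intro hc
    have h1 : fBH (BSa * (BSt⁻¹ * BSa * BSt) * BSa⁻¹ * (BSt⁻¹ * BSa⁻¹ * BSt)) = 1 := by
      rw [hc, map_one]
    simp only [map_mul, map_inv, fBH_a, fBH_t] at h1
    have h2 : wred.prod φh = 1 := by rw [wred_prod, ← h1]
    have h3 := HNNExtension.ReducedWord.toList_eq_nil_of_mem_of_range φh wred
      (by rw [h2]; exact ⟨1, map_one _⟩)
    simp [wred] at h3
  · -- existence of the surjective endomorphism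
    have hrel2 : ∀ r ∈ BSrel,
        FreeGroup.lift (![BSa^2, BSt]) r = 1 := by
      rintro r hr
      rw [BSrel, Set.mem_singleton_iff] at hr
      subst hr
      simp only [map_mul, map_inv, map_pow, FreeGroup.lift_apply_of, Matrix.cons_val_zero,
        Matrix.cons_val_one, Matrix.head_cons]
      have key : BSt⁻¹ * (BSa^2)^2 * BSt = (BSa^2)^3 := by
        calc BSt⁻¹ * (BSa^2)^2 * BSt = (BSt⁻¹ * BSa^2 * BSt) * (BSt⁻¹ * BSa^2 * BSt) := by
              group
          _ = BSa^3 * BSa^3 := by rw [BS_rel]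
          _ = (BSa^2)^3 := by group
      rw [← key]
      group
    set φ₀ : BS →* BS := PresentedGroup.toGroup hrel2 with hφ₀
    have ha2 : φ₀ BSa = BSa^2 := by
      show PresentedGroup.toGroup hrel2 (PresentedGroup.of 0) = _
      rw [PresentedGroup.toGroup.of]
      rfl
    have ht2 : φ₀ BSt = BSt := by
      show PresentedGroup.toGroup hrel2 (PresentedGroup.of 1) = _
      rw [PresentedGroup.toGroup.of]
      rfl
    refine ⟨φ₀, ha2, ht2, ?_⟩
    intro y
    have hy : y ∈ MonoidHom.range φ₀ := by
      refine PresentedGroup.generated_by BSrel (MonoidHom.range φ₀) (fun j => ?_) y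
      fin_cases j
      · refine ⟨BSt⁻¹ * BSa * BSt * BSa⁻¹, ?_⟩
        simp only [map_mul, map_inv, ha2, ht2]
        show BSt⁻¹ * BSa^2 * BSt * (BSa^2)⁻¹ = BSa
        rw [BS_rel]
        group
      · exact ⟨BSt, ht2⟩
    exact hy
  · -- kernel membership
    intro φ hφa hφt
    simp only [map_mul, map_inv, hφa, hφt]
    rw [BS_rel, BS_rel_inv]
    group
end

section
/- The Baumslag–Solitar group BS(2,3) is not Hopfian, and hence not residually finite. -/
namespace BS23

open Multiplicative HNNExtension

/-! ### The generators of `BS(2,3)` and the defining relation -/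

def aB : BS := PresentedGroup.of (rels := BSrel) 0
def tB : BS := PresentedGroup.of (rels := BSrel) 1

lemma rel_bs : tB⁻¹ * aB ^ 2 * tB = aB ^ 3 := by
  have h : (PresentedGroup.mk BSrel ((FreeGroup.of 1)⁻¹ * (FreeGroup.of 0) ^ 2 *
      FreeGroup.of 1 * ((FreeGroup.of 0) ^ 3)⁻¹)) = 1 := by
    apply (QuotientGroup.eq_one_iff _).2
    exact Subgroup.subset_normalClosure rfl
  rw [map_mul, map_mul, map_mul, map_inv, map_inv, map_pow, map_pow] at h
  have h' : tB⁻¹ * aB ^ 2 * tB * (aB ^ 3)⁻¹ = 1 := h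
  rwa [mul_inv_eq_one] at h'

/-! ### The non-injective surjective endomorphism `ψ : a ↦ a², t ↦ t` -/

def ψf : Fin 2 → BS := ![aB ^ 2, tB]

lemma ψ_rels : ∀ r ∈ BSrel, FreeGroup.lift ψf r = 1 := by
  intro r hr
  rw [BSrel, Set.mem_singleton_iff] at hr
  subst hr
  rw [map_mul, map_mul, map_mul, map_inv, map_inv, map_pow, map_pow,
    FreeGroup.lift_apply_of, FreeGroup.lift_apply_of]
  show (ψf 1)⁻¹ * ψf 0 ^ 2 * ψf 1 * (ψf 0 ^ 3)⁻¹ = 1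
  have h4 : tB⁻¹ * (aB ^ 2) ^ 2 * tB = (aB ^ 2) ^ 3 := by
    have : tB⁻¹ * (aB ^ 2) ^ 2 * tB
        = (tB⁻¹ * aB ^ 2 * tB) * (tB⁻¹ * aB ^ 2 * tB) := by group
    rw [this, rel_bs]
    group
  show tB⁻¹ * (aB ^ 2) ^ 2 * tB * ((aB ^ 2) ^ 3)⁻¹ = 1
  rw [h4, mul_inv_cancel]

def ψ : BS →* BS := PresentedGroup.toGroup ψ_rels

lemma ψ_aB : ψ aB = aB ^ 2 := PresentedGroup.toGroup.of ψ_rels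
lemma ψ_tB : ψ tB = tB := PresentedGroup.toGroup.of ψ_rels

lemma ψ_surj : Function.Surjective ψ := by
  have hrange : (ψ.range : Subgroup BS) = ⊤ := by
    rw [eq_top_iff, ← (show @Subgroup.closure BS _ (Set.range (PresentedGroup.of (rels := BSrel))) = ⊤
      from PresentedGroup.closure_range_of BSrel),
      Subgroup.closure_le]
    rintro x ⟨i, rfl⟩
    fin_cases i
    · refine ⟨tB⁻¹ * aB * tB * aB⁻¹, ?_⟩
      have : ψ (tB⁻¹ * aB * tB * aB⁻¹)
          = tB⁻¹ * aB ^ 2 * tB * (aB ^ 2)⁻¹ := by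
        rw [map_mul, map_mul, map_mul, map_inv, map_inv, ψ_aB, ψ_tB]
      rw [this, rel_bs]
      show aB ^ 3 * (aB ^ 2)⁻¹ = aB
      group
    · exact ⟨tB, ψ_tB⟩
  intro x
  have : x ∈ ψ.range := hrange ▸ Subgroup.mem_top x
  exact this

/-- The element `[t⁻¹at, a]`, which is killed by `ψ` but is nontrivial. -/
def cB : BS := (tB⁻¹ * aB * tB) * aB * (tB⁻¹ * aB * tB)⁻¹ * aB⁻¹

lemma ψ_cB : ψ cB = 1 := by
  have h : ψ cB = (tB⁻¹ * aB ^ 2 * tB) * aB ^ 2 * (tB⁻¹ * aB ^ 2 * tB)⁻¹ * (aB ^ 2)⁻¹ := by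
    rw [cB, map_mul, map_mul, map_mul, map_inv, map_inv, map_mul, map_mul, ψ_aB, ψ_tB,
      map_inv, ψ_tB]
  rw [h, rel_bs]
  group

/-! ### The HNN extension `HNN(ℤ; 2ℤ, 3ℤ)` and Britton's lemma -/

def A : Subgroup (Multiplicative ℤ) := Subgroup.zpowers (ofAdd 2)
def B : Subgroup (Multiplicative ℤ) := Subgroup.zpowers (ofAdd 3)

lemma mem_A {x : Multiplicative ℤ} : x ∈ A ↔ (2:ℤ) ∣ x.toAdd := by
  rw [A, Subgroup.mem_zpowers_iff]
  constructor
  · rintro ⟨n, rfl⟩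
    exact ⟨n, by rw [toAdd_zpow, toAdd_ofAdd, smul_eq_mul]; ring⟩
  · rintro ⟨c, hc⟩
    refine ⟨c, ?_⟩
    apply Multiplicative.toAdd.injective
    rw [toAdd_zpow, toAdd_ofAdd, smul_eq_mul, hc]
    ring

lemma mem_B {x : Multiplicative ℤ} : x ∈ B ↔ (3:ℤ) ∣ x.toAdd := by
  rw [B, Subgroup.mem_zpowers_iff]
  constructor
  · rintro ⟨n, rfl⟩
    exact ⟨n, by rw [toAdd_zpow, toAdd_ofAdd, smul_eq_mul]; ring⟩
  · rintro ⟨c, hc⟩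
    refine ⟨c, ?_⟩
    apply Multiplicative.toAdd.injective
    rw [toAdd_zpow, toAdd_ofAdd, smul_eq_mul, hc]
    ring

/-- The isomorphism `2ℤ ≃ 3ℤ`, `2n ↦ 3n`. -/
def e : A ≃* B where
  toFun x := ⟨ofAdd ((x : Multiplicative ℤ).toAdd / 2 * 3), mem_B.2 (by simp)⟩
  invFun x := ⟨ofAdd ((x : Multiplicative ℤ).toAdd / 3 * 2), mem_A.2 (by simp)⟩
  left_inv x := by
    obtain ⟨n, hn⟩ := mem_A.1 x.2
    apply Subtype.ext
    apply Multiplicative.toAdd.injective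
    simp [hn]
  right_inv x := by
    obtain ⟨n, hn⟩ := mem_B.1 x.2
    apply Subtype.ext
    apply Multiplicative.toAdd.injective
    simp [hn]
  map_mul' x y := by
    obtain ⟨m, hm⟩ := mem_A.1 x.2
    obtain ⟨n, hn⟩ := mem_A.1 y.2
    apply Subtype.ext
    apply Multiplicative.toAdd.injective
    show ((x : Multiplicative ℤ) * (y : Multiplicative ℤ)).toAdd / 2 * 3
      = ((x : Multiplicative ℤ).toAdd / 2 * 3) + ((y : Multiplicative ℤ).toAdd / 2 * 3)
    rw [toAdd_mul, hm, hn]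
    omega

lemma e_apply : (e ⟨ofAdd 2, Subgroup.mem_zpowers _⟩ : Multiplicative ℤ) = ofAdd 3 := by
  show ofAdd ((ofAdd (2:ℤ)).toAdd / 2 * 3) = ofAdd 3
  norm_num

abbrev H : Type := HNNExtension (Multiplicative ℤ) A B e

noncomputable def g1 : H := HNNExtension.of (ofAdd 1)

lemma g1_sq : g1 ^ 2 = HNNExtension.of (ofAdd (2:ℤ)) := by
  rw [g1, ← map_pow]
  congr 1

lemma g1_cube : g1 ^ 3 = HNNExtension.of (ofAdd (3:ℤ)) := by
  rw [g1, ← map_pow]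
  congr 1

lemma key : HNNExtension.t * g1 ^ 2 * HNNExtension.t⁻¹ = HNNExtension.of (ofAdd (3:ℤ)) := by
  rw [g1_sq]
  have := (equiv_eq_conj (φ := e) ⟨ofAdd 2, Subgroup.mem_zpowers _⟩).symm
  rw [e_apply] at this
  exact this

/-! ### The homomorphism `β : BS → H`, `a ↦ g1`, `t ↦ t⁻¹` -/

noncomputable def βf : Fin 2 → H := ![g1, HNNExtension.t⁻¹]

lemma β_rels : ∀ r ∈ BSrel, FreeGroup.lift βf r = 1 := by
  intro r hr
  rw [BSrel, Set.mem_singleton_iff] at hr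
  subst hr
  rw [map_mul, map_mul, map_mul, map_inv, map_inv, map_pow, map_pow,
    FreeGroup.lift_apply_of, FreeGroup.lift_apply_of]
  show (βf 1)⁻¹ * βf 0 ^ 2 * βf 1 * (βf 0 ^ 3)⁻¹ = 1
  show (HNNExtension.t⁻¹)⁻¹ * g1 ^ 2 * HNNExtension.t⁻¹ * (g1 ^ 3)⁻¹ = 1
  rw [inv_inv, key, g1_cube, mul_inv_cancel]

noncomputable def β : BS →* H := PresentedGroup.toGroup β_rels

lemma β_aB : β aB = g1 := PresentedGroup.toGroup.of β_rels
lemma β_tB : β tB = HNNExtension.t⁻¹ := PresentedGroup.toGroup.of β_rels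

/-! ### Nontriviality of `cB` via Britton's lemma -/

lemma notA1 : ofAdd (1:ℤ) ∉ A := by rw [mem_A]; simp
lemma notB1 : ofAdd (1:ℤ) ∉ B := by rw [mem_B]; simp only [toAdd_ofAdd]; omega
lemma notA1' : ofAdd (-1:ℤ) ∉ A := by rw [mem_A]; simp

def w : NormalWord.ReducedWord (Multiplicative ℤ) A B :=
  ⟨1, [(1, ofAdd (1:ℤ)), (-1, ofAdd (1:ℤ)), (1, ofAdd (-1:ℤ)), (-1, ofAdd (-1:ℤ))], by
    refine List.isChain_cons_cons.2 ⟨fun h => absurd h notA1, List.isChain_cons_cons.2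
      ⟨fun h => absurd h notB1, List.isChain_cons_cons.2
      ⟨fun h => absurd h notA1', List.isChain_singleton _⟩⟩⟩⟩

lemma g1_inv : g1⁻¹ = HNNExtension.of (ofAdd (-1:ℤ)) := by
  rw [g1, ← map_inv]
  rfl

lemma w_prod : w.prod e =
    HNNExtension.t * g1 * HNNExtension.t⁻¹ * g1 * HNNExtension.t * g1⁻¹
      * HNNExtension.t⁻¹ * g1⁻¹ := by
  simp only [NormalWord.ReducedWord.prod, w, List.map_cons, List.map_nil, List.prod_cons,
    List.prod_nil, map_one, one_mul, mul_one, g1_inv, g1]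
  norm_num [mul_assoc]

lemma β_cB : β cB = w.prod e := by
  rw [cB, map_mul, map_mul, map_mul, map_inv, map_inv, map_mul, map_mul, β_aB, β_tB,
    map_inv, β_tB, w_prod]
  group

lemma cB_ne_one : cB ≠ 1 := by
  intro h
  have h1 : w.prod e = 1 := by rw [← β_cB, h, map_one]
  have h2 : w.prod e ∈ (HNNExtension.of.range : Subgroup H) := by
    rw [h1]; exact one_mem _
  have h3 := HNNExtension.ReducedWord.toList_eq_nil_of_mem_of_range e w h2
  simp [w] at h3

lemma ψ_not_inj : ¬ Function.Injective ψ := by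
  intro h
  exact cB_ne_one (h (by rw [ψ_cB, map_one]))

/-! ### Malcev: residual finiteness would imply the Hopf property -/

def iter : ℕ → (BS →* BS)
  | 0 => MonoidHom.id BS
  | n + 1 => (iter n).comp ψ

lemma iter_succ (n : ℕ) (x : BS) : iter (n + 1) x = iter n (ψ x) := rfl

lemma iter_add (m n : ℕ) (x : BS) : iter (m + n) x = iter m (iter n x) := by
  induction n generalizing x with
  | zero => rfl
  | succ k ih => rw [← Nat.add_assoc, iter_succ, iter_succ, ih]

lemma iter_surj (n : ℕ) : Function.Surjective (iter n) := by
  induction n with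
  | zero => exact fun x => ⟨x, rfl⟩
  | succ k ih =>
      intro x
      obtain ⟨y, hy⟩ := ih x
      obtain ⟨z, hz⟩ := ψ_surj y
      exact ⟨z, by rw [iter_succ, hz, hy]⟩

lemma iter_cB (n : ℕ) (hn : 1 ≤ n) : iter n cB = 1 := by
  obtain ⟨k, rfl⟩ := Nat.exists_eq_add_of_le hn
  rw [Nat.add_comm, iter_succ, ψ_cB, map_one]

end BS23

/-- `BS(2,3)` is not Hopfian: some surjective endomorphism fails to be injective.
Hence it is not residually finite. -/
theorem BS23_not_hopfian_not_residually_finite :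
    (∃ φ : BS →* BS, Function.Surjective φ ∧ ¬ Function.Injective φ) ∧
    ¬ (∀ g : BS, g ≠ 1 → ∃ (Q : Type) (_ : Group Q) (_ : Finite Q)
        (φ : BS →* Q), φ g ≠ 1) := by
  constructor
  · exact ⟨BS23.ψ, BS23.ψ_surj, BS23.ψ_not_inj⟩
  · intro hRF
    obtain ⟨Q, _, _, χ, hχ⟩ := hRF BS23.cB BS23.cB_ne_one
    -- the homomorphisms `BS →* Q` form a finite set
    have hfin : Finite (BS →* Q) := by
      have hinj : Function.Injective (fun (f : BS →* Q) => (f BS23.aB, f BS23.tB)) := by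
        intro f g hfg
        have h0 : f BS23.aB = g BS23.aB := congrArg Prod.fst hfg
        have h1 : f BS23.tB = g BS23.tB := congrArg Prod.snd hfg
        refine PresentedGroup.ext (rels := BSrel) ?_
        intro x
        fin_cases x
        · exact h0
        · exact h1
      exact Finite.of_injective _ hinj
    -- pigeonhole on `n ↦ χ ∘ ψⁿ`
    obtain ⟨i, j, hij, hF⟩ := Finite.exists_ne_map_eq_of_infinite
      (fun n : ℕ => χ.comp (BS23.iter n))
    wlog hlt : i < j generalizing i j
    · exact this j i hij.symm hF.symm (by omega)
    -- from `χ ∘ ψ^i = χ ∘ ψ^j` and surjectivity of `ψ^i` deduce `χ = χ ∘ ψ^(j-i)`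
    have hcomp : ∀ x, χ x = χ (BS23.iter (j - i) x) := by
      intro x
      obtain ⟨y, hy⟩ := BS23.iter_surj i x
      have h1 : χ (BS23.iter i y) = χ (BS23.iter j y) := by
        have := congrArg (fun f : BS →* Q => f y) hF
        simpa using this
      have h2 : BS23.iter j y = BS23.iter (j - i) (BS23.iter i y) := by
        rw [← BS23.iter_add, Nat.sub_add_cancel (le_of_lt hlt)]
      rw [← hy, h1, h2]
    have : χ BS23.cB = 1 := by
      rw [hcomp BS23.cB, BS23.iter_cB (j - i) (by omega), map_one]
    exact hχ this
end

section
/- Let G be a group with finite generating set A (no a ∈ A representing 1), let g ∈ G be nontrivial, and consider the free product G ∗ ⟨t⟩ with generating set A* = {at : a ∈ A} ∪ {[g,t], t}. Then for every n ≥ 1, the word length of [g,t]ⁿ with respect to A* equals n; i.e., the cyclic subgroup generated by [g,t] is isometrically embedded. -/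
open Monoid

namespace CPAux

open Monoid.CoprodI

section General

variable {ι : Type} {M : ι → Type} [∀ i, Monoid (M i)]
set_option linter.unusedSectionVars false
variable [DecidableEq ι] [∀ i, DecidableEq (M i)]

theorem length_rcons_le {i : ι} (p : Word.Pair M i) :
    (Word.rcons p).toList.length ≤ p.tail.toList.length + 1 := by
  unfold Word.rcons
  split <;> simp [Word.cons]

theorem tail_length_le (i : ι) (w : Word M) :
    (Word.equivPair i w).tail.toList.length ≤ w.toList.length := by
  have h : Word.rcons (Word.equivPair i w) = w := by
    rw [← Word.equivPair_symm]; exact (Word.equivPair i).symm_apply_apply w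
  conv_rhs => rw [← h]
  unfold Word.rcons
  split <;> simp [Word.cons]

theorem length_of_smul_le {i : ι} (m : M i) (w : Word M) :
    (CoprodI.of m • w).toList.length ≤ w.toList.length + 1 := by
  rw [Word.of_smul_def]
  exact le_trans (length_rcons_le _) (Nat.add_le_add_right (tail_length_le i w) 1)

theorem length_prod_smul_le (w' w : Word M) :
    (w'.prod • w).toList.length ≤ w'.toList.length + w.toList.length := by
  induction w' using Word.consRecOn with
  | empty => simp [Word.prod_empty]
  | cons i m w'' h1 h2 ih =>
    rw [Word.prod_cons, mul_smul]
    calc (CoprodI.of m • (w''.prod • w)).toList.length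
        ≤ (w''.prod • w).toList.length + 1 := length_of_smul_le _ _
      _ ≤ w''.toList.length + w.toList.length + 1 := Nat.add_le_add_right ih 1
      _ = (Word.cons m w'' h1 h2).toList.length + w.toList.length := by
          simp [Word.cons]; ring

/-- Number of syllables of an element of a free product. -/
noncomputable def syl (x : CoprodI M) : ℕ := (Word.equiv x).toList.length

theorem equiv_prod (w : Word M) : Word.equiv (w.prod) = w :=
  Word.equiv.apply_symm_apply w

theorem syl_prod_word (w : Word M) : syl w.prod = w.toList.length := by
  rw [syl, equiv_prod]

theorem syl_one : syl (1 : CoprodI M) = 0 := by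
  have h0 : Word.equiv (1 : CoprodI M) = (1 : CoprodI M) • Word.empty := rfl
  have : Word.equiv (1 : CoprodI M) = Word.empty := by rw [h0, one_smul]
  simp [syl, this, Word.empty]

theorem syl_mul_le (x y : CoprodI M) : syl (x * y) ≤ syl x + syl y := by
  have h1 : Word.equiv (x * y) = x • Word.equiv y := by
    have e1 : Word.equiv (x * y) = (x * y) • Word.empty := rfl
    have e2 : Word.equiv y = y • Word.empty := rfl
    rw [e1, e2, mul_smul]
  have h2 : (Word.equiv x).prod = x := Word.equiv.symm_apply_apply x
  have := length_prod_smul_le (Word.equiv x) (Word.equiv y)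
  rw [h2] at this
  rw [syl, h1]
  exact this

theorem syl_of_le {i : ι} (m : M i) : syl (CoprodI.of m) ≤ 1 := by
  have h1 : Word.equiv (CoprodI.of m) = CoprodI.of m • Word.empty := rfl
  rw [syl, h1]
  simpa [Word.empty] using length_of_smul_le m Word.empty

theorem syl_list_prod_le (l : List (CoprodI M)) : syl l.prod ≤ (l.map syl).sum := by
  induction l with
  | nil => simp [syl_one]
  | cons a l ih =>
    simp only [List.prod_cons, List.map_cons, List.sum_cons]
    exact le_trans (syl_mul_le a l.prod) (Nat.add_le_add_left ih _)

end General

/-! ### The specific free product `G ∗ FreeGroup Unit` -/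

abbrev MM (G : Type) : Bool → Type := fun b => cond b (FreeGroup Unit) G

instance (G : Type) [Group G] : ∀ b, Group (MM G b)
  | false => inferInstanceAs (Group G)
  | true => inferInstanceAs (Group (FreeGroup Unit))

noncomputable instance (G : Type) [Group G] : ∀ b, DecidableEq (MM G b) :=
  fun _ => Classical.decEq _

variable (G : Type) [Group G]

/-- The canonical iso-candidate map from binary coprod to indexed coprod. -/
noncomputable def φ : Coprod G (FreeGroup Unit) →* CoprodI (MM G) :=
  Coprod.lift (CoprodI.of (M := MM G) (i := false)) (CoprodI.of (M := MM G) (i := true))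

@[simp] theorem φ_inl (x : G) : φ G (Coprod.inl x) = CoprodI.of (M := MM G) (i := false) x :=
  Coprod.lift_apply_inl _ _ _

@[simp] theorem φ_inr (x : FreeGroup Unit) :
    φ G (Coprod.inr x) = CoprodI.of (M := MM G) (i := true) x :=
  Coprod.lift_apply_inr _ _ _

/-- The letter `t`. -/
noncomputable def τ : FreeGroup Unit := FreeGroup.of ()

variable (g : G)

/-- The alternating list underlying the normal form of `[g,t]^n`. -/
noncomputable def Ln : ℕ → List (Σ b, MM G b)
  | 0 => []
  | n + 1 =>
      (⟨false, g⟩ : Σ b, MM G b) :: ⟨true, τ⟩ :: ⟨false, g⁻¹⟩ :: ⟨true, τ⁻¹⟩ :: Ln n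

theorem length_Ln (n : ℕ) : (Ln G g n).length = 4 * n := by
  induction n with
  | zero => simp [Ln]
  | succ n ih => simp [Ln, ih]; ring

theorem ne_one_Ln (hg : g ≠ 1) (n : ℕ) : ∀ x ∈ Ln G g n, x.2 ≠ 1 := by
  induction n with
  | zero => simp [Ln]
  | succ n ih =>
    intro x hx
    simp only [Ln, List.mem_cons] at hx
    rcases hx with rfl | rfl | rfl | rfl | hx
    · exact hg
    · exact FreeGroup.of_ne_one ()
    · exact inv_ne_one.mpr hg
    · exact inv_ne_one.mpr (FreeGroup.of_ne_one ())
    · exact ih x hx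

theorem chain_Ln (n : ℕ) :
    (Ln G g n).Chain' (fun a b => a.1 ≠ b.1) ∧
    ((⟨true, τ⁻¹⟩ :: Ln G g n) : List (Σ b, MM G b)).Chain' (fun a b => a.1 ≠ b.1) := by
  induction n with
  | zero => simp [Ln, List.Chain']
  | succ n ih =>
    refine ⟨?_, ?_⟩ <;>
      simp only [Ln, List.Chain', List.isChain_cons_cons] at ih ⊢ <;>
      simp_all

/-- The reduced word representing `[g,t]^n`. -/
noncomputable def cword (hg : g ≠ 1) (n : ℕ) : Word (MM G) :=
  ⟨Ln G g n, ne_one_Ln G g hg n, (chain_Ln G g n).1⟩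

theorem prod_cword (hg : g ≠ 1) (n : ℕ) :
    (cword G g hg n).prod =
      (CoprodI.of (M := MM G) (i := false) g * CoprodI.of (M := MM G) (i := true) τ *
        (CoprodI.of (M := MM G) (i := false) g)⁻¹ *
        (CoprodI.of (M := MM G) (i := true) τ)⁻¹) ^ n := by
  induction n with
  | zero => simp [cword, Word.prod, Ln]
  | succ n ih =>
    have : (cword G g hg (n+1)).toList = (⟨false, g⟩ : Σ b, MM G b) :: ⟨true, τ⟩ ::
        ⟨false, g⁻¹⟩ :: ⟨true, τ⁻¹⟩ :: (cword G g hg n).toList := rfl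
    rw [Word.prod, this]
    simp only [List.map_cons, List.prod_cons]
    rw [← Word.prod, ih, pow_succ']
    simp [mul_assoc, map_inv]
    exact map_inv (CoprodI.of (M := MM G) (i := true)) τ

theorem syl_pow (hg : g ≠ 1) (n : ℕ) :
    syl ((CoprodI.of (M := MM G) (i := false) g * CoprodI.of (M := MM G) (i := true) τ *
        (CoprodI.of (M := MM G) (i := false) g)⁻¹ *
        (CoprodI.of (M := MM G) (i := true) τ)⁻¹) ^ n) = 4 * n := by
  rw [← prod_cword G g hg n, syl_prod_word]
  exact length_Ln G g n

end CPAux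

/-- The word length of `x` with respect to a generating set `S`: the least `k`
such that `x` is a product of `k` elements of `S ∪ S⁻¹`. -/
noncomputable def wordLength {G : Type} [Group G] (S : Set G) (x : G) : ℕ :=
  sInf {n | ∃ l : List G, l.length = n ∧ (∀ y ∈ l, y ∈ S ∨ y⁻¹ ∈ S) ∧ l.prod = x}

/-- Let `G` be a group with finite generating set `A` not containing the identity
and let `g ∈ G` be nontrivial.  In the free product `G ∗ ⟨t⟩`, with respect to the
generating set `A* = {at : a ∈ A} ∪ {[g,t], t}`, the word length of `[g,t]ⁿ` is
exactly `n` for all `n ≥ 1`: the cyclic subgroup generated by `[g,t]` is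
isometrically embedded. -/
theorem commutator_powers_isometrically_embedded
    (G : Type) [Group G] (A : Finset G) (hgen : Subgroup.closure (A : Set G) = ⊤)
    (h1 : (1 : G) ∉ A) (g : G) (hg : g ≠ 1) :
    let t : Coprod G (FreeGroup Unit) := Coprod.inr (FreeGroup.of ())
    let c : Coprod G (FreeGroup Unit) := Coprod.inl g * t * (Coprod.inl g)⁻¹ * t⁻¹
    let Astar : Set (Coprod G (FreeGroup Unit)) :=
      {x | ∃ a ∈ A, x = Coprod.inl a * t} ∪ {c, t}
    ∀ n : ℕ, 1 ≤ n → wordLength Astar (c ^ n) = n := by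
  intro t c Astar n hn
  open CPAux in
  -- abbreviation for the syllable-counting function
  set S : Coprod G (FreeGroup Unit) → ℕ := fun y => CPAux.syl (CPAux.φ G y) with hS
  have hτ : (Coprod.inr (CPAux.τ) : Coprod G (FreeGroup Unit)) = t := rfl
  -- the value of syl on c ^ n
  have hφc : CPAux.φ G c = CoprodI.of (M := CPAux.MM G) (i := false) g *
      CoprodI.of (M := CPAux.MM G) (i := true) CPAux.τ *
      (CoprodI.of (M := CPAux.MM G) (i := false) g)⁻¹ *
      (CoprodI.of (M := CPAux.MM G) (i := true) CPAux.τ)⁻¹ := by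
    simp [c, t, CPAux.τ, map_mul, map_inv]
  have hScn : ∀ m : ℕ, S (c ^ m) = 4 * m := by
    intro m
    rw [hS]
    simp only [map_pow, hφc]
    exact CPAux.syl_pow G g hg m
  -- witness for the upper bound
  have hwit : n ∈ {k | ∃ l : List (Coprod G (FreeGroup Unit)),
      l.length = k ∧ (∀ y ∈ l, y ∈ Astar ∨ y⁻¹ ∈ Astar) ∧ l.prod = c ^ n} := by
    refine ⟨List.replicate n c, List.length_replicate, ?_, List.prod_replicate n c⟩
    intro y hy
    rw [List.eq_of_mem_replicate hy]
    left
    exact Set.mem_union_right _ (Set.mem_insert c {t})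
  have hub : wordLength Astar (c ^ n) ≤ n := Nat.sInf_le hwit
  -- every element of Astar ∪ Astar⁻¹ is a product of ≤ 4 letters
  have hfac : ∀ y : Coprod G (FreeGroup Unit), (y ∈ Astar ∨ y⁻¹ ∈ Astar) →
      ∃ L : List (Coprod G (FreeGroup Unit)), L.length ≤ 4 ∧
        (∀ z ∈ L, (∃ x, z = Coprod.inl x) ∨ (∃ x, z = Coprod.inr x)) ∧ L.prod = y := by
    intro y hy
    have expand : ∀ z : Coprod G (FreeGroup Unit), z ∈ Astar →
        ∃ L : List (Coprod G (FreeGroup Unit)), L.length ≤ 4 ∧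
        (∀ w ∈ L, (∃ x, w = Coprod.inl x) ∨ (∃ x, w = Coprod.inr x)) ∧ L.prod = z := by
      intro z hz
      simp only [Astar, Set.mem_union, Set.mem_setOf_eq, Set.mem_insert_iff,
        Set.mem_singleton_iff] at hz
      rcases hz with ⟨a, _, rfl⟩ | rfl | rfl
      · refine ⟨[Coprod.inl a, t], by norm_num, ?_, by simp [t]⟩
        intro w hw
        simp only [List.mem_cons, List.not_mem_nil, or_false] at hw
        rcases hw with rfl | rfl
        · exact Or.inl ⟨_, rfl⟩
        · exact Or.inr ⟨_, rfl⟩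
      · refine ⟨[Coprod.inl g, t, Coprod.inl g⁻¹, (Coprod.inr (FreeGroup.of ())⁻¹ :
          Coprod G (FreeGroup Unit))], by norm_num, ?_, ?_⟩
        · rintro w hw
          simp only [List.mem_cons, List.not_mem_nil, or_false] at hw
          rcases hw with rfl | rfl | rfl | rfl
          · exact Or.inl ⟨_, rfl⟩
          · exact Or.inr ⟨_, rfl⟩
          · exact Or.inl ⟨_, rfl⟩
          · exact Or.inr ⟨_, rfl⟩
        · simp [c, t, map_inv, mul_assoc]
      · refine ⟨[t], by norm_num, ?_, by simp⟩
        intro w hw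
        simp only [List.mem_cons, List.not_mem_nil, or_false] at hw
        rcases hw with rfl
        exact Or.inr ⟨_, rfl⟩
    rcases hy with hy | hy
    · exact expand y hy
    · obtain ⟨L, hL4, hLmem, hLprod⟩ := expand y⁻¹ hy
      refine ⟨(L.map (·⁻¹)).reverse, by simpa using hL4, ?_, ?_⟩
      · intro z hz
        simp only [List.mem_reverse, List.mem_map] at hz
        obtain ⟨w, hw, rfl⟩ := hz
        rcases hLmem w hw with ⟨x, rfl⟩ | ⟨x, rfl⟩
        · exact Or.inl ⟨x⁻¹, by simp [map_inv]⟩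
        · exact Or.inr ⟨x⁻¹, by simp [map_inv]⟩
      · rw [List.prod_reverse_noncomm, List.map_map]
        have hcomp : ((fun x => x⁻¹) ∘ fun x : Coprod G (FreeGroup Unit) => x⁻¹) = id := by
          funext x; simp
        rw [hcomp, List.map_id, hLprod, inv_inv]
  -- syllable bound on the generators
  have hS4 : ∀ y : Coprod G (FreeGroup Unit), (y ∈ Astar ∨ y⁻¹ ∈ Astar) → S y ≤ 4 := by
    intro y hy
    obtain ⟨L, hL4, hLmem, rfl⟩ := hfac y hy
    rw [hS]
    simp only [map_list_prod]
    refine le_trans (CPAux.syl_list_prod_le _) ?_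
    refine le_trans (List.sum_le_card_nsmul _ 1 ?_) ?_
    · intro x hx
      simp only [List.map_map, List.mem_map] at hx
      obtain ⟨w, hw, rfl⟩ := hx
      rcases hLmem w hw with ⟨x, rfl⟩ | ⟨x, rfl⟩ <;>
        simp only [Function.comp_apply, φ_inl, φ_inr] <;>
        exact CPAux.syl_of_le _
    · simp only [List.map_map, List.length_map, smul_eq_mul, mul_one]
      exact hL4
  -- lower bound
  have hlb : n ≤ wordLength Astar (c ^ n) := by
    obtain ⟨l, hlen, hml, hprod⟩ := Nat.sInf_mem (Set.nonempty_of_mem hwit)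
    rw [wordLength, ← hlen]
    have h4 : 4 * n ≤ 4 * l.length := by
      have e1 : 4 * n = S (c ^ n) := (hScn n).symm
      rw [e1, ← hprod, hS]
      simp only [map_list_prod]
      refine le_trans (CPAux.syl_list_prod_le _) ?_
      refine le_trans (List.sum_le_card_nsmul _ 4 ?_) ?_
      · intro x hx
        simp only [List.map_map, List.mem_map] at hx
        obtain ⟨w, hw, rfl⟩ := hx
        exact hS4 w (hml w hw)
      · simp [smul_eq_mul, mul_comm]
    omega
  exact le_antisymm hub hlb
end

section
/- Let G be a group with finite generating set A, none of whose elements represents 1. In the free product G ∗ ⟨t⟩, for each a ∈ A, the word length of (at)ⁿ with respect to the generating set A* = {a't : a' ∈ A} ∪ {[g,t], t} equals n for all n ≥ 1, where g ∈ G is any fixed nontrivial element. -/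
open Monoid

/-- Let `G` be a group with finite generating set `A` not containing the identity
and let `g ∈ G` be a fixed nontrivial element.  In the free product `G ∗ ⟨t⟩`,
with respect to the generating set `A* = {a't : a' ∈ A} ∪ {[g,t], t}`, the word
length of `(at)ⁿ` is exactly `n` for every `a ∈ A` and every `n ≥ 1`. -/
theorem at_powers_isometrically_embedded
    (G : Type) [Group G] (A : Finset G) (hgen : Subgroup.closure (A : Set G) = ⊤)
    (h1 : (1 : G) ∉ A) (g : G) (hg : g ≠ 1) :
    let t : Coprod G (FreeGroup Unit) := Coprod.inr (FreeGroup.of ())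
    let c : Coprod G (FreeGroup Unit) := Coprod.inl g * t * (Coprod.inl g)⁻¹ * t⁻¹
    let Astar : Set (Coprod G (FreeGroup Unit)) :=
      {x | ∃ a' ∈ A, x = Coprod.inl a' * t} ∪ {c, t}
    ∀ a ∈ A, ∀ n : ℕ, 1 ≤ n → wordLength Astar ((Coprod.inl a * t) ^ n) = n := by
  intro t c Astar a ha n hn
  -- the t-exponent-sum homomorphism
  set φ : Coprod G (FreeGroup Unit) →* Multiplicative ℤ :=
    Coprod.lift 1 (FreeGroup.lift fun _ => Multiplicative.ofAdd (1 : ℤ)) with hφ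
  set f : Coprod G (FreeGroup Unit) → ℤ := fun x => Multiplicative.toAdd (φ x) with hf
  have hft : f t = 1 := by simp [hf, hφ, t]
  have hfinl : ∀ x : G, f (Coprod.inl x) = 0 := by intro x; simp [hf, hφ]
  have hfmul : ∀ x y, f (x * y) = f x + f y := by intro x y; simp [hf, map_mul]
  have hfinv : ∀ x, f x⁻¹ = -f x := by intro x; simp [hf, map_inv]
  have hfat : ∀ a' : G, f (Coprod.inl a' * t) = 1 := by
    intro a'; rw [hfmul, hfinl, hft]; ring
  have hfc : f c = 0 := by
    simp only [c, hfmul, hfinv, hfinl, hft]; ring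
  have hfS : ∀ y ∈ Astar, f y ≤ 1 ∧ 0 ≤ f y := by
    rintro y (⟨a', _, rfl⟩ | rfl | rfl)
    · rw [hfat]; exact ⟨le_refl 1, zero_le_one⟩
    · rw [hfc]; exact ⟨zero_le_one, le_refl 0⟩
    · rw [hft]; exact ⟨le_refl 1, zero_le_one⟩
  have hgenbd : ∀ y : Coprod G (FreeGroup Unit), (y ∈ Astar ∨ y⁻¹ ∈ Astar) → f y ≤ 1 := by
    rintro y (hy | hy)
    · exact (hfS y hy).1
    · have := (hfS _ hy).2
      rw [hfinv] at this
      linarith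
  have hprodsum : ∀ l : List (Coprod G (FreeGroup Unit)), f l.prod = (l.map f).sum := by
    intro l
    induction l with
    | nil => simp [hf]
    | cons x xs ih => rw [List.prod_cons, hfmul, ih, List.map_cons, List.sum_cons]
  have hfpow : f ((Coprod.inl a * t) ^ n) = n := by
    have : ((Coprod.inl a * t) ^ n) = (List.replicate n (Coprod.inl a * t)).prod := by
      rw [List.prod_replicate]
    rw [this, hprodsum, List.map_replicate, hfat, List.sum_replicate]
    simp
  -- lower bound on every element of the set
  have hlb : ∀ m ∈ {m | ∃ l : List (Coprod G (FreeGroup Unit)),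
      l.length = m ∧ (∀ y ∈ l, y ∈ Astar ∨ y⁻¹ ∈ Astar) ∧ l.prod = (Coprod.inl a * t) ^ n},
      n ≤ m := by
    rintro m ⟨l, hlen, hmem, hprod⟩
    have h1' : ((n : ℤ)) = (l.map f).sum := by rw [← hprodsum, hprod, hfpow]
    have h2' : (l.map f).sum ≤ (l.map f).length • (1 : ℤ) :=
      List.sum_le_card_nsmul _ 1 (by
        intro x hx
        obtain ⟨y, hy, rfl⟩ := List.mem_map.mp hx
        exact hgenbd y (hmem y hy))
    simp only [List.length_map, hlen, nsmul_eq_mul, mul_one] at h2'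
    have : (n : ℤ) ≤ m := h1' ▸ h2'
    exact_mod_cast this
  -- membership: replicate list
  have hmemset : n ∈ {m | ∃ l : List (Coprod G (FreeGroup Unit)),
      l.length = m ∧ (∀ y ∈ l, y ∈ Astar ∨ y⁻¹ ∈ Astar) ∧ l.prod = (Coprod.inl a * t) ^ n} := by
    refine ⟨List.replicate n (Coprod.inl a * t), List.length_replicate, ?_, ?_⟩
    · intro y hy
      rw [List.eq_of_mem_replicate hy]
      exact Or.inl (Or.inl ⟨a, ha, rfl⟩)
    · rw [List.prod_replicate]
  refine le_antisymm (Nat.sInf_le hmemset) (hlb _ (Nat.sInf_mem ⟨n, hmemset⟩))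
end

section
/- Let E be an HNN extension of a group G with stable letter σ, with associated subgroups A, B ≤ G, and let a ∈ G be an element of infinite order such that no nonzero power of a lies in A or in B. Then the subgroup of E generated by {a, σ} is free of rank 2. -/
namespace FreeRankTwoAux

variable {G : Type} [Group G]

/-- Convert a word in the letters `a` (true) and `t` (false) into a head element and a
list of pairs `(u, g)`. -/
def conv (a : G) : List (Bool × Bool) → G × List (ℤˣ × G)
  | [] => (1, [])
  | (true, b) :: L => ((if b then a else a⁻¹) * (conv a L).1, (conv a L).2)
  | (false, b) :: L => (1, ((if b then (1 : ℤˣ) else -1), (conv a L).1) :: (conv a L).2)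

/-- The sign of the first `t`-letter in the word, if any. -/
def firstT : List (Bool × Bool) → Option ℤˣ
  | [] => none
  | (true, _) :: L => firstT L
  | (false, b) :: _ => some (if b then 1 else -1)

lemma not_mem_toSubgroup (A B : Subgroup G) {a : G}
    (ha : ∀ n : ℤ, n ≠ 0 → a ^ n ≠ 1 ∧ a ^ n ∉ A ∧ a ^ n ∉ B)
    {k : ℤ} (hk : k ≠ 0) (u : ℤˣ) : a ^ k ∉ HNNExtension.toSubgroup A B u := by
  rcases Int.units_eq_one_or u with rfl | rfl
  · rw [HNNExtension.toSubgroup_one]; exact (ha k hk).2.1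
  · rw [HNNExtension.toSubgroup_neg_one]; exact (ha k hk).2.2

lemma conv_spec (A B : Subgroup G) {a : G}
    (ha : ∀ n : ℤ, n ≠ 0 → a ^ n ≠ 1 ∧ a ^ n ∉ A ∧ a ^ n ∉ B) :
    ∀ L : List (Bool × Bool),
      (∀ (L₂ : List (Bool × Bool)) (x : Bool) (b : Bool) (L₃ : List (Bool × Bool)),
          L ≠ L₂ ++ (x, b) :: (x, !b) :: L₃) →
      ∃ k : ℤ, (conv a L).1 = a ^ k ∧
        (L = [] → k = 0) ∧
        (∀ b L', L = (false, b) :: L' → k = 0) ∧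
        (∀ L', L = (true, true) :: L' → 0 < k) ∧
        (∀ L', L = (true, false) :: L' → k < 0) ∧
        ((conv a L).2.head?.map Prod.fst = firstT L) ∧
        List.Chain' (fun p q => p.2 ∈ HNNExtension.toSubgroup A B p.1 → p.1 = q.1)
          (conv a L).2
  | [] => fun _ => ⟨0, by simp [conv, firstT, List.Chain', List.isChain_nil]⟩
  | (true, b) :: L => fun hnc => by
    have hncL : ∀ (L₂ : List (Bool × Bool)) (x b' : Bool) L₃,
        L ≠ L₂ ++ (x, b') :: (x, !b') :: L₃ := fun L₂ x b' L₃ h =>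
      hnc ((true, b) :: L₂) x b' L₃ (by simp [h])
    obtain ⟨k, hk, hnil, hfalse, htt, htf, hfirst, hchain⟩ := conv_spec A B ha L hncL
    have hsign : (b = true → 0 < 1 + k) ∧ (b = false → -1 + k < 0) := by
      rcases L with - | ⟨⟨x, b'⟩, L''⟩
      · have hk0 : k = 0 := hnil rfl
        constructor <;> intro <;> omega
      · rcases x with _ | _
        · have hk0 : k = 0 := hfalse b' L'' rfl
          constructor <;> intro <;> omega
        · rcases b with _ | _ <;> rcases b' with _ | _
          · have := htf L'' rfl
            exact ⟨by simp, fun _ => by omega⟩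
          · exact (hnc [] true false L'' (by simp)).elim
          · exact (hnc [] true true L'' (by simp)).elim
          · have := htt L'' rfl
            exact ⟨fun _ => by omega, by simp⟩
    refine ⟨(if b then (1 : ℤ) else -1) + k, ?_, by simp, by simp, ?_, ?_, hfirst, hchain⟩
    · show (if b then a else a⁻¹) * (conv a L).1 = _
      rw [hk]
      rcases b with _ | _ <;>
        simp [zpow_add, zpow_one, zpow_neg_one]
    · intro L' hL'
      simp only [List.cons.injEq, Prod.mk.injEq] at hL'
      rw [if_pos hL'.1.2]
      exact hsign.1 hL'.1.2
    · intro L' hL'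
      simp only [List.cons.injEq, Prod.mk.injEq] at hL'
      rw [hL'.1.2, if_neg (by simp : ¬(false = true))]
      exact hsign.2 hL'.1.2
  | (false, b) :: L => fun hnc => by
    have hncL : ∀ (L₂ : List (Bool × Bool)) (x b' : Bool) L₃,
        L ≠ L₂ ++ (x, b') :: (x, !b') :: L₃ := fun L₂ x b' L₃ h =>
      hnc ((false, b) :: L₂) x b' L₃ (by simp [h])
    obtain ⟨k, hk, hnil, hfalse, htt, htf, hfirst, hchain⟩ := conv_spec A B ha L hncL
    refine ⟨0, by simp [conv], by simp, fun _ _ _ => rfl, by simp, by simp, ?_, ?_⟩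
    · show some (if b then (1 : ℤˣ) else -1) = _
      rfl
    · show List.Chain' _ (((if b then (1 : ℤˣ) else -1), (conv a L).1) :: (conv a L).2)
      unfold List.Chain'
      rw [List.isChain_cons]
      refine ⟨?_, hchain⟩
      rintro ⟨u', g'⟩ hq hmem
      show (if b then (1 : ℤˣ) else -1) = u'
      rcases eq_or_ne k 0 with hk0 | hk0
      · rcases L with - | ⟨⟨x, b'⟩, L''⟩
        · simp [conv] at hq
        · rcases x with _ | _
          · have hu' : some u' = some (if b' then (1 : ℤˣ) else -1) := by
              rw [show some (if b' then (1 : ℤˣ) else -1) =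
                  firstT ((false, b') :: L'') from rfl, ← hfirst]
              simp only [conv] at hq ⊢
              rw [hq]
              rfl
            have hu'' : u' = (if b' then (1 : ℤˣ) else -1) :=
              Option.some_injective _ hu'
            rcases b with _ | _ <;> rcases b' with _ | _
            · simp [hu'']
            · exact (hnc [] false false L'' (by simp)).elim
            · exact (hnc [] false true L'' (by simp)).elim
            · simp [hu'']
          · exfalso
            rcases b' with _ | _
            · exact absurd hk0 (by have := htf L'' rfl; omega)
            · exact absurd hk0 (by have := htt L'' rfl; omega)
      · exfalso
        rw [hk] at hmem
        exact not_mem_toSubgroup A B ha hk0 _ hmem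

lemma conv_prod (A B : Subgroup G) (φ : A ≃* B) (a : G) :
    ∀ L : List (Bool × Bool),
      (HNNExtension.of (conv a L).1 *
        ((conv a L).2.map
          (fun x => HNNExtension.t ^ (x.1 : ℤ) * HNNExtension.of x.2)).prod :
          HNNExtension G A B φ) =
      (L.map fun x => cond x.2 ((if x.1 then HNNExtension.of a else HNNExtension.t))
        ((if x.1 then HNNExtension.of a else HNNExtension.t))⁻¹).prod
  | [] => by simp [conv]
  | (true, b) :: L => by
    have ih := conv_prod A B φ a L
    rcases b with _ | _ <;>
      simp [conv, List.prod_cons, mul_assoc, ih]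
  | (false, b) :: L => by
    have ih := conv_prod A B φ a L
    rcases b with _ | _ <;>
      simp [conv, List.prod_cons, mul_assoc, ih, zpow_neg, Units.val_neg, Units.val_one]

end FreeRankTwoAux

/-- Let `E = HNNExtension G A B φ` with stable letter `t`, and let `a ∈ G` be an
element of infinite order no nonzero power of which lies in `A` or in `B`.  Then
`{a, t}` freely generates a free subgroup of rank 2 of `E`. -/
theorem free_rank_two_in_HNNExtension
    (G : Type) [Group G] (A B : Subgroup G) (φ : A ≃* B) (a : G)
    (ha : ∀ n : ℤ, n ≠ 0 → a ^ n ≠ 1 ∧ a ^ n ∉ A ∧ a ^ n ∉ B) :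
    Function.Injective
      (FreeGroup.lift
        (fun b : Bool => if b then HNNExtension.of a else HNNExtension.t) :
        FreeGroup Bool →* HNNExtension G A B φ) := by
  rw [injective_iff_map_eq_one]
  intro w hw
  by_contra hw1
  set L := w.toWord with hL
  have hred : FreeGroup.reduce L = L := FreeGroup.reduce_toWord w
  have hnc : ∀ (L₂ : List (Bool × Bool)) (x b : Bool) L₃,
      L ≠ L₂ ++ (x, b) :: (x, !b) :: L₃ := by
    intro L₂ x b L₃ h
    exact FreeGroup.reduce.not
      (hred.symm ▸ h ▸ rfl : FreeGroup.reduce L = L₂ ++ (x, b) :: (x, !b) :: L₃)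
  obtain ⟨k, hk, hnil, hfalse, htt, htf, hfirst, hchain⟩ :=
    FreeRankTwoAux.conv_spec A B ha L hnc
  set r : HNNExtension.NormalWord.ReducedWord G A B :=
    ⟨(FreeRankTwoAux.conv a L).1, (FreeRankTwoAux.conv a L).2, hchain⟩ with hr
  have hprod : r.prod φ = FreeGroup.lift
      (fun b : Bool => if b then HNNExtension.of a else HNNExtension.t) w := by
    rw [← FreeGroup.mk_toWord (x := w), FreeGroup.lift_mk]
    exact FreeRankTwoAux.conv_prod A B φ a L
  rw [hw] at hprod
  have hlist : r.toList = [] := by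
    apply HNNExtension.ReducedWord.toList_eq_nil_of_mem_of_range
    rw [hprod]
    exact ⟨1, by simp⟩
  have hfT : FreeRankTwoAux.firstT L = none := by
    rw [← hfirst]
    simp [show (FreeRankTwoAux.conv a L).2 = [] from hlist]
  have hLne : L ≠ [] := fun h => hw1 (FreeGroup.toWord_eq_nil_iff.mp h)
  rcases hL' : L with - | ⟨⟨x, b⟩, L'⟩
  · exact hLne hL'
  · rcases x with _ | _
    · simp [hL', FreeRankTwoAux.firstT] at hfT
    · have hk0 : k ≠ 0 := by
        rcases b with _ | _
        · have := htf L' hL'; omega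
        · have := htt L' hL'; omega
      have h1 : HNNExtension.of (a ^ k) = (1 : HNNExtension G A B φ) := by
        rw [← hk]
        have h2 := hprod
        rw [hr] at h2
        have hl2 : (FreeRankTwoAux.conv a L).2 = [] := hlist
        simpa [HNNExtension.NormalWord.ReducedWord.prod, hl2] using h2
      have := HNNExtension.of_injective (φ := φ)
        (show HNNExtension.of (a ^ k) = HNNExtension.of (1 : G) by
          rw [map_one]; exact h1)
      exact (ha k hk0).1 this
end

section
/- If groups G₁ and G₂ have Dehn functions bounded by polynomials, and G is an amalgamated free product G₁ ∗_H G₂ along a finitely generated subgroup H that is isometrically embedded in both factors (with respect to compatible finite generating sets), then G has Dehn function bounded by a polynomial. -/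
/-- `f` is an isoperimetric (Dehn-type) bound for the presentation `⟨α ∣ R⟩`:
every word `w` over `α` representing `1` in the presented group can be written in
the free group as a product of at most `f |w|` conjugates of relators or their
inverses. -/
def IsDehnBound {α : Type} (R : Set (FreeGroup α)) (f : ℕ → ℕ) : Prop :=
  ∀ w : List (α × Bool), FreeGroup.mk w ∈ Subgroup.normalClosure R →
    ∃ l : List (FreeGroup α), l.length ≤ f w.length ∧
      (∀ x ∈ l, ∃ r ∈ R, ∃ c : FreeGroup α, x = c⁻¹ * r * c ∨ x = c⁻¹ * r⁻¹ * c) ∧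
      l.prod = FreeGroup.mk w

namespace AmalgamDehn


variable {α β : Type}

/-- A conjugate of a relator or its inverse. -/
def Conjish (R : Set (FreeGroup α)) (x : FreeGroup α) : Prop :=
  ∃ r ∈ R, ∃ c : FreeGroup α, x = c⁻¹ * r * c ∨ x = c⁻¹ * r⁻¹ * c

/-- `g` is a product of at most `m` conjugates of relators. -/
def AreaLe (R : Set (FreeGroup α)) (m : ℕ) (g : FreeGroup α) : Prop :=
  ∃ l : List (FreeGroup α), l.length ≤ m ∧ (∀ x ∈ l, Conjish R x) ∧ l.prod = g

theorem areaLe_one {R : Set (FreeGroup α)} : AreaLe R 0 1 :=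
  ⟨[], by simp⟩

theorem AreaLe.mono {R : Set (FreeGroup α)} {m m' : ℕ} {g : FreeGroup α}
    (h : m ≤ m') (ha : AreaLe R m g) : AreaLe R m' g := by
  obtain ⟨l, hl, hc, hp⟩ := ha
  exact ⟨l, hl.trans h, hc, hp⟩

theorem AreaLe.mul {R : Set (FreeGroup α)} {m m' : ℕ} {g g' : FreeGroup α}
    (h : AreaLe R m g) (h' : AreaLe R m' g') : AreaLe R (m + m') (g * g') := by
  obtain ⟨l, hl, hc, hp⟩ := h
  obtain ⟨l', hl', hc', hp'⟩ := h'
  refine ⟨l ++ l', ?_, ?_, ?_⟩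
  · simpa using Nat.add_le_add hl hl'
  · intro x hx
    rcases List.mem_append.1 hx with hx | hx
    exacts [hc x hx, hc' x hx]
  · rw [List.prod_append, hp, hp']

theorem Conjish.inv {R : Set (FreeGroup α)} {x : FreeGroup α} (h : Conjish R x) :
    Conjish R x⁻¹ := by
  obtain ⟨r, hr, c, h | h⟩ := h
  · exact ⟨r, hr, c, Or.inr (by rw [h]; group)⟩
  · exact ⟨r, hr, c, Or.inl (by rw [h]; group)⟩

theorem AreaLe.inv {R : Set (FreeGroup α)} {m : ℕ} {g : FreeGroup α}
    (h : AreaLe R m g) : AreaLe R m g⁻¹ := by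
  obtain ⟨l, hl, hc, hp⟩ := h
  refine ⟨(l.map fun x => x⁻¹).reverse, by simpa using hl, ?_, ?_⟩
  · intro x hx
    simp only [List.mem_reverse, List.mem_map] at hx
    obtain ⟨y, hy, rfl⟩ := hx
    exact (hc y hy).inv
  · rw [← List.prod_inv_reverse, hp]

theorem Conjish.conj {R : Set (FreeGroup α)} {x : FreeGroup α} (c : FreeGroup α)
    (h : Conjish R x) : Conjish R (c * x * c⁻¹) := by
  obtain ⟨r, hr, e, h | h⟩ := h
  · exact ⟨r, hr, e * c⁻¹, Or.inl (by rw [h]; group)⟩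
  · exact ⟨r, hr, e * c⁻¹, Or.inr (by rw [h]; group)⟩

theorem prod_conj_map {G : Type*} [Group G] (c : G) (l : List G) :
    (l.map fun x => c * x * c⁻¹).prod = c * l.prod * c⁻¹ := by
  induction l with
  | nil => simp
  | cons x l ih => rw [List.map_cons, List.prod_cons, List.prod_cons, ih]; group

theorem AreaLe.conj {R : Set (FreeGroup α)} {m : ℕ} {g : FreeGroup α}
    (c : FreeGroup α) (h : AreaLe R m g) : AreaLe R m (c * g * c⁻¹) := by
  obtain ⟨l, hl, hc, hp⟩ := h
  refine ⟨l.map fun x => c * x * c⁻¹, by simpa using hl, ?_, ?_⟩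
  · intro x hx
    simp only [List.mem_map] at hx
    obtain ⟨y, hy, rfl⟩ := hx
    exact (hc y hy).conj c
  · rw [prod_conj_map, hp]

theorem AreaLe.map {R : Set (FreeGroup α)} {R' : Set (FreeGroup β)}
    (f : FreeGroup α →* FreeGroup β) (hR : ∀ r ∈ R, f r ∈ R')
    {m : ℕ} {g : FreeGroup α} (h : AreaLe R m g) : AreaLe R' m (f g) := by
  obtain ⟨l, hl, hc, hp⟩ := h
  refine ⟨l.map f, by simpa using hl, ?_, ?_⟩
  · intro x hx
    simp only [List.mem_map] at hx
    obtain ⟨y, hy, rfl⟩ := hx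
    obtain ⟨r, hr, c, hy | hy⟩ := hc y hy
    · exact ⟨f r, hR r hr, f c, Or.inl (by rw [hy]; simp)⟩
    · exact ⟨f r, hR r hr, f c, Or.inr (by rw [hy]; simp)⟩
  · rw [← map_list_prod, hp]

theorem AreaLe.mem_normalClosure {R : Set (FreeGroup α)} {m : ℕ} {g : FreeGroup α}
    (h : AreaLe R m g) : g ∈ Subgroup.normalClosure R := by
  obtain ⟨l, _, hc, hp⟩ := h
  rw [← hp]
  refine list_prod_mem fun x hx => ?_
  obtain ⟨r, hr, c, h | h⟩ := hc x hx
  · rw [h]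
    exact Subgroup.normalClosure_normal.conj_mem' _ (Subgroup.subset_normalClosure hr) _
  · rw [h]
    exact Subgroup.normalClosure_normal.conj_mem' _
      (Subgroup.inv_mem _ (Subgroup.subset_normalClosure hr)) _

/-- `mk` of a word as an explicit product of generators and inverses. -/
theorem mk_eq_prod (L : List (α × Bool)) :
    FreeGroup.mk L = (L.map fun x => cond x.2 (FreeGroup.of x.1) (FreeGroup.of x.1)⁻¹).prod := by
  induction L with
  | nil => rfl
  | cons x L ih =>
    rcases x with ⟨a, b⟩
    have h1 : FreeGroup.mk ((a, b) :: L) = FreeGroup.mk [(a, b)] * FreeGroup.mk L := by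
      rw [FreeGroup.mul_mk]; rfl
    have h2 : FreeGroup.mk [(a, b)] = cond b (FreeGroup.of a) (FreeGroup.of a)⁻¹ := by
      cases b
      · rw [show ((FreeGroup.of a)⁻¹ : FreeGroup α) = FreeGroup.mk (FreeGroup.invRev [(a, true)])
          from (FreeGroup.inv_mk).symm]
        rfl
      · rfl
    rw [h1, h2, List.map_cons, List.prod_cons, ih]




variable {G : Type} [Group G]

theorem wordLength_le {S : Set G} {x : G} {l : List G}
    (hl : ∀ y ∈ l, y ∈ S ∨ y⁻¹ ∈ S) (hp : l.prod = x) : wordLength S x ≤ l.length :=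
  Nat.sInf_le ⟨l, rfl, hl, hp⟩

theorem exists_list_of_mem_closure {S : Set G} {x : G} (hx : x ∈ Subgroup.closure S) :
    ∃ l : List G, (∀ y ∈ l, y ∈ S ∨ y⁻¹ ∈ S) ∧ l.prod = x := by
  have hx' : x ∈ Submonoid.closure (S ∪ S⁻¹) := by
    rw [← Subgroup.closure_toSubmonoid]
    exact hx
  obtain ⟨l, hl, hp⟩ := Submonoid.exists_list_of_mem_closure hx'
  exact ⟨l, fun y hy => by
    rcases hl y hy with h | h
    · exact Or.inl h
    · exact Or.inr (Set.mem_inv.mp h), hp⟩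

theorem exists_list_length_wordLength {S : Set G} {x : G} (hx : x ∈ Subgroup.closure S) :
    ∃ l : List G, l.length = wordLength S x ∧ (∀ y ∈ l, y ∈ S ∨ y⁻¹ ∈ S) ∧ l.prod = x := by
  obtain ⟨l, hl, hp⟩ := exists_list_of_mem_closure hx
  have hne : {n | ∃ l : List G, l.length = n ∧ (∀ y ∈ l, y ∈ S ∨ y⁻¹ ∈ S) ∧ l.prod = x}.Nonempty :=
    ⟨l.length, l, rfl, hl, hp⟩
  exact Nat.sInf_mem hne

/-! ### Polynomial bounds -/

def PolyB (f : ℕ → ℕ) : Prop := ∃ K d : ℕ, ∀ n, f n ≤ K * n ^ d + K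

theorem PolyB.of_le {f g : ℕ → ℕ} (h : ∀ n, f n ≤ g n) (hg : PolyB g) : PolyB f := by
  obtain ⟨K, d, hK⟩ := hg
  exact ⟨K, d, fun n => (h n).trans (hK n)⟩

theorem polyB_id : PolyB id := ⟨1, 1, fun n => by simp⟩

theorem polyB_const (c : ℕ) : PolyB fun _ => c := ⟨c, 0, fun n => by simp⟩

theorem pow_zero_le_one (d : ℕ) : (0:ℕ) ^ d ≤ 1 := by
  cases d <;> simp

theorem PolyB.add {f g : ℕ → ℕ} (hf : PolyB f) (hg : PolyB g) : PolyB fun n => f n + g n := by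
  obtain ⟨K, d, hK⟩ := hf
  obtain ⟨L, e, hL⟩ := hg
  refine ⟨2 * (K + L), d + e, fun n => ?_⟩
  rcases Nat.eq_zero_or_pos n with rfl | hn
  · have h1 : K * 0 ^ d ≤ K := by
      calc K * 0 ^ d ≤ K * 1 := Nat.mul_le_mul_left K (pow_zero_le_one d)
        _ = K := Nat.mul_one K
    have h2 : L * 0 ^ e ≤ L := by
      calc L * 0 ^ e ≤ L * 1 := Nat.mul_le_mul_left L (pow_zero_le_one e)
        _ = L := Nat.mul_one L
    have := Nat.add_le_add (hK 0) (hL 0)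
    show f 0 + g 0 ≤ 2 * (K + L) * 0 ^ (d + e) + 2 * (K + L)
    omega
  · have h1 : n ^ d ≤ n ^ (d + e) := Nat.pow_le_pow_right hn (Nat.le_add_right d e)
    have h2 : n ^ e ≤ n ^ (d + e) := Nat.pow_le_pow_right hn (Nat.le_add_left e d)
    have h3 := Nat.mul_le_mul_left K h1
    have h4 := Nat.mul_le_mul_left L h2
    have := Nat.add_le_add (hK n) (hL n)
    nlinarith [Nat.zero_le (n ^ (d + e))]

theorem PolyB.mul {f g : ℕ → ℕ} (hf : PolyB f) (hg : PolyB g) : PolyB fun n => f n * g n := by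
  obtain ⟨K, d, hK⟩ := hf
  obtain ⟨L, e, hL⟩ := hg
  refine ⟨4 * (K * L), d + e, fun n => ?_⟩
  have key : ∀ n, f n * g n ≤ 4 * (K * L) * n ^ (d + e) + 4 * (K * L) → True := fun _ _ => trivial
  rcases Nat.eq_zero_or_pos n with rfl | hn
  · have h1 : f 0 ≤ K + K := by
      have := hK 0
      have h1' : K * 0 ^ d ≤ K := by
        calc K * 0 ^ d ≤ K * 1 := Nat.mul_le_mul_left K (pow_zero_le_one d)
          _ = K := Nat.mul_one K
      omega
    have h2 : g 0 ≤ L + L := by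
      have := hL 0
      have h2' : L * 0 ^ e ≤ L := by
        calc L * 0 ^ e ≤ L * 1 := Nat.mul_le_mul_left L (pow_zero_le_one e)
          _ = L := Nat.mul_one L
      omega
    have := Nat.mul_le_mul h1 h2
    nlinarith [Nat.zero_le (4 * (K * L) * 0 ^ (d + e))]
  · have h1 : n ^ d ≤ n ^ (d + e) := Nat.pow_le_pow_right hn (Nat.le_add_right d e)
    have h2 : n ^ e ≤ n ^ (d + e) := Nat.pow_le_pow_right hn (Nat.le_add_left e d)
    have h3 : (1:ℕ) ≤ n ^ (d + e) := Nat.one_le_pow _ _ hn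
    have hde : n ^ d * n ^ e = n ^ (d + e) := (pow_add n d e).symm
    calc f n * g n ≤ (K * n ^ d + K) * (L * n ^ e + L) := Nat.mul_le_mul (hK n) (hL n)
      _ = K * L * (n ^ d * n ^ e) + K * L * n ^ d + K * L * n ^ e + K * L := by ring
      _ = K * L * n ^ (d + e) + K * L * n ^ d + K * L * n ^ e + K * L := by rw [hde]
      _ ≤ K * L * n ^ (d+e) + K * L * n ^ (d+e) + K * L * n ^ (d+e) + K * L := by
          have h3' := Nat.mul_le_mul_left (K * L) h1
          have h4' := Nat.mul_le_mul_left (K * L) h2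
          omega
      _ ≤ 4 * (K * L) * n ^ (d + e) + 4 * (K * L) := by nlinarith [Nat.zero_le (K * L)]

theorem PolyB.comp_mul_left {f : ℕ → ℕ} (c : ℕ) (hf : PolyB f) : PolyB fun n => f (c * n) := by
  obtain ⟨K, d, hK⟩ := hf
  refine ⟨K * c ^ d + K, d, fun n => ?_⟩
  calc f (c * n) ≤ K * (c * n) ^ d + K := hK _
    _ = K * c ^ d * n ^ d + K := by rw [mul_pow]; ring
    _ ≤ (K * c ^ d + K) * n ^ d + (K * c ^ d + K) :=
        Nat.add_le_add (Nat.mul_le_mul_right _ (Nat.le_add_right _ _)) (Nat.le_add_left _ _)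

/-- The monotone envelope of `f`. -/
def env (f : ℕ → ℕ) (n : ℕ) : ℕ := Finset.sup (Finset.range (n + 1)) f

theorem le_env (f : ℕ → ℕ) {m n : ℕ} (h : m ≤ n) : f m ≤ env f n :=
  Finset.le_sup (Finset.mem_range.mpr (Nat.lt_succ_of_le h))

theorem env_mono (f : ℕ → ℕ) {m n : ℕ} (h : m ≤ n) : env f m ≤ env f n :=
  Finset.sup_mono (Finset.range_subset_range.mpr (Nat.succ_le_succ h))

theorem PolyB.env {f : ℕ → ℕ} (hf : PolyB f) : PolyB (env f) := by
  obtain ⟨K, d, hK⟩ := hf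
  refine ⟨K, d, fun n => ?_⟩
  refine Finset.sup_le fun m hm => ?_
  have hm' : m ≤ n := Nat.lt_succ_iff.mp (Finset.mem_range.mp hm)
  exact (hK m).trans (Nat.add_le_add_right
    (Nat.mul_le_mul_left K (Nat.pow_le_pow_left hm' d)) K)

theorem env_le (f : ℕ → ℕ) : ∀ n, f n ≤ env f n := fun n => le_env f le_rfl



open Monoid


section Chunks

variable {Λ : Type*}

open scoped Classical in
/-- Normalize a list of chunks: drop empty chunks and merge adjacent chunks with
the same label. -/
noncomputable def norm : List (Bool × List Λ) → List (Bool × List Λ)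
  | [] => []
  | x :: xs =>
    if x.2 = [] then norm xs
    else match norm xs with
      | [] => [x]
      | y :: ys' => if x.1 = y.1 then (x.1, x.2 ++ y.2) :: ys' else x :: y :: ys'

open scoped Classical in
theorem norm_cons (x : Bool × List Λ) (xs : List (Bool × List Λ)) :
    norm (x :: xs) =
      if x.2 = [] then norm xs
      else match norm xs with
        | [] => [x]
        | y :: ys' => if x.1 = y.1 then (x.1, x.2 ++ y.2) :: ys' else x :: y :: ys' := by
  rw [norm]

/-- The underlying word of a list of chunks. -/
def Jn (ss : List (Bool × List Λ)) : List Λ := (ss.map Prod.snd).flatten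

@[simp] theorem Jn_nil : Jn ([] : List (Bool × List Λ)) = [] := rfl

@[simp] theorem Jn_cons (x : Bool × List Λ) (ss : List (Bool × List Λ)) :
    Jn (x :: ss) = x.2 ++ Jn ss := rfl

theorem Jn_append (s t : List (Bool × List Λ)) : Jn (s ++ t) = Jn s ++ Jn t := by
  simp [Jn]

theorem norm_length (ss : List (Bool × List Λ)) : (norm ss).length ≤ ss.length := by
  induction ss with
  | nil => simp [norm]
  | cons x xs ih =>
    rw [norm_cons]
    by_cases hx : x.2 = []
    · rw [if_pos hx]
      exact ih.trans (Nat.le_succ _)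
    · rw [if_neg hx]
      rcases h : norm xs with _ | ⟨y, ys'⟩
      · simp
      · rw [h] at ih
        dsimp only
        by_cases hb : x.1 = y.1
        · rw [if_pos hb]
          simp only [List.length_cons] at ih ⊢
          omega
        · rw [if_neg hb]
          simp only [List.length_cons] at ih ⊢
          omega

theorem norm_join (ss : List (Bool × List Λ)) : Jn (norm ss) = Jn ss := by
  induction ss with
  | nil => rfl
  | cons x xs ih =>
    rw [norm_cons]
    by_cases hx : x.2 = []
    · rw [if_pos hx, Jn_cons, hx, List.nil_append, ih]
    · rw [if_neg hx]
      rcases h : norm xs with _ | ⟨y, ys'⟩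
      · rw [h] at ih
        conv_rhs => rw [Jn_cons, ← ih]
        rfl
      · rw [h] at ih
        dsimp only
        by_cases hb : x.1 = y.1
        · rw [if_pos hb]
          show (x.2 ++ y.2) ++ Jn ys' = Jn (x :: xs)
          conv_rhs => rw [Jn_cons, ← ih, Jn_cons]
          rw [List.append_assoc]
        · rw [if_neg hb]
          conv_rhs => rw [Jn_cons, ← ih]
          rfl

theorem norm_prop {P : Bool → List Λ → Prop}
    (hP : ∀ b s t, P b s → P b t → P b (s ++ t))
    (ss : List (Bool × List Λ)) (h : ∀ x ∈ ss, P x.1 x.2) :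
    ∀ x ∈ norm ss, P x.1 x.2 := by
  induction ss with
  | nil => simp [norm]
  | cons x xs ih =>
    have hx := h x (List.mem_cons_self)
    have hxs := fun z hz => h z (List.mem_cons_of_mem _ hz)
    rw [norm_cons]
    by_cases hxe : x.2 = []
    · rw [if_pos hxe]
      exact ih hxs
    · rw [if_neg hxe]
      rcases heq : norm xs with _ | ⟨y, ys'⟩
      · intro z hz
        rw [List.mem_singleton] at hz
        subst hz; exact hx
      · have ihy := ih hxs
        rw [heq] at ihy
        dsimp only
        by_cases hb : x.1 = y.1
        · rw [if_pos hb]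
          intro z hz
          rcases List.mem_cons.1 hz with rfl | hz
          · exact hP _ _ _ hx (hb ▸ ihy y (List.mem_cons_self))
          · exact ihy z (List.mem_cons_of_mem _ hz)
        · rw [if_neg hb]
          intro z hz
          rcases List.mem_cons.1 hz with rfl | hz
          · exact hx
          · exact ihy z hz

theorem norm_ne_nil (ss : List (Bool × List Λ)) : ∀ x ∈ norm ss, x.2 ≠ [] := by
  induction ss with
  | nil => simp [norm]
  | cons x xs ih =>
    rw [norm_cons]
    by_cases hxe : x.2 = []
    · rw [if_pos hxe]; exact ih
    · rw [if_neg hxe]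
      rcases heq : norm xs with _ | ⟨y, ys'⟩
      · intro z hz
        rw [List.mem_singleton] at hz
        subst hz; exact hxe
      · rw [heq] at ih
        dsimp only
        by_cases hb : x.1 = y.1
        · rw [if_pos hb]
          intro z hz
          rcases List.mem_cons.1 hz with rfl | hz
          · simp only [ne_eq, List.append_eq_nil_iff]
            intro ⟨h1, _⟩; exact hxe h1
          · exact ih z (List.mem_cons_of_mem _ hz)
        · rw [if_neg hb]
          intro z hz
          rcases List.mem_cons.1 hz with rfl | hz
          · exact hxe
          · exact ih z hz

theorem norm_chain (ss : List (Bool × List Λ)) :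
    (norm ss).IsChain fun x y => x.1 ≠ y.1 := by
  induction ss with
  | nil => simp [norm]
  | cons x xs ih =>
    rw [norm_cons]
    by_cases hxe : x.2 = []
    · rw [if_pos hxe]; exact ih
    · rw [if_neg hxe]
      rcases heq : norm xs with _ | ⟨y, ys'⟩
      · simp
      · rw [heq] at ih
        dsimp only
        by_cases hb : x.1 = y.1
        · rw [if_pos hb]
          rcases ys' with _ | ⟨z, ys''⟩
          · simp
          · rw [List.isChain_cons_cons] at ih ⊢
            exact ⟨hb ▸ ih.1, ih.2⟩
        · rw [if_neg hb]
          exact List.isChain_cons_cons.2 ⟨hb, ih⟩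

end Chunks



/-! ### Sides and extraction -/

/-- All letters of `s` lie on side `b` (`true` = `A₁`). -/
def OnSide {A₁ A₂ : Type} (b : Bool) (s : List ((A₁ ⊕ A₂) × Bool)) : Prop :=
  ∀ p ∈ s, p.1.isLeft = b

theorem OnSide.append {A₁ A₂ : Type} {b : Bool} {s t : List ((A₁ ⊕ A₂) × Bool)}
    (hs : OnSide b s) (ht : OnSide b t) : OnSide b (s ++ t) := by
  intro p hp
  rcases List.mem_append.1 hp with h | h
  exacts [hs p h, ht p h]

def extrL {A₁ A₂ : Type} (s : List ((A₁ ⊕ A₂) × Bool)) : List (A₁ × Bool) :=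
  s.filterMap fun p => match p.1 with
    | .inl a => some (a, p.2)
    | .inr _ => none

def extrR {A₁ A₂ : Type} (s : List ((A₁ ⊕ A₂) × Bool)) : List (A₂ × Bool) :=
  s.filterMap fun p => match p.1 with
    | .inl _ => none
    | .inr a => some (a, p.2)

theorem extrL_spec {A₁ A₂ : Type} {s : List ((A₁ ⊕ A₂) × Bool)} (h : OnSide true s) :
    (extrL s).map (fun q => ((Sum.inl q.1 : A₁ ⊕ A₂), q.2)) = s ∧
      (extrL s).length = s.length := by
  induction s with
  | nil => simp [extrL]
  | cons p s ih =>
    have hp := h p (List.mem_cons_self)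
    have hs : OnSide true s := fun q hq => h q (List.mem_cons_of_mem _ hq)
    obtain ⟨ih1, ih2⟩ := ih hs
    rcases p with ⟨a | a, b⟩
    · simp only [extrL, List.filterMap_cons] at *
      simp_all
    · simp at hp

theorem extrR_spec {A₁ A₂ : Type} {s : List ((A₁ ⊕ A₂) × Bool)} (h : OnSide false s) :
    (extrR s).map (fun q => ((Sum.inr q.1 : A₁ ⊕ A₂), q.2)) = s ∧
      (extrR s).length = s.length := by
  induction s with
  | nil => simp [extrR]
  | cons p s ih =>
    have hp := h p (List.mem_cons_self)
    have hs : OnSide false s := fun q hq => h q (List.mem_cons_of_mem _ hq)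
    obtain ⟨ih1, ih2⟩ := ih hs
    rcases p with ⟨a | a, b⟩
    · simp at hp
    · simp only [extrR, List.filterMap_cons] at *
      simp_all

theorem mk_extrL {A₁ A₂ : Type} {s : List ((A₁ ⊕ A₂) × Bool)} (h : OnSide true s) :
    FreeGroup.map Sum.inl (FreeGroup.mk (extrL s)) = FreeGroup.mk s := by
  rw [FreeGroup.map.mk]
  exact congrArg _ (extrL_spec h).1

theorem mk_extrR {A₁ A₂ : Type} {s : List ((A₁ ⊕ A₂) × Bool)} (h : OnSide false s) :
    FreeGroup.map Sum.inr (FreeGroup.mk (extrR s)) = FreeGroup.mk s := by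
  rw [FreeGroup.map.mk]
  exact congrArg _ (extrR_spec h).1

/-- A homomorphic image of `mk L` as an explicit product. -/
theorem hom_mk_eq_prod {α : Type} {G : Type*} [Group G] (F : FreeGroup α →* G)
    (L : List (α × Bool)) :
    F (FreeGroup.mk L) =
      (L.map fun x => cond x.2 (F (FreeGroup.of x.1)) (F (FreeGroup.of x.1))⁻¹).prod := by
  rw [mk_eq_prod, map_list_prod, List.map_map]
  congr 1
  apply List.map_congr_left
  intro x _
  rcases x with ⟨a, b⟩
  cases b <;> simp


theorem area_replace {γ : Type} {Rs : Set (FreeGroup γ)} {m m' : ℕ}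
    (X W S' T : FreeGroup γ)
    (hD : AreaLe Rs m (W * S'⁻¹)) (h' : AreaLe Rs m' (X * S' * T)) :
    AreaLe Rs (m + m') (X * W * T) := by
  have := (hD.conj X).mul h'
  have heq : X * (W * S'⁻¹) * X⁻¹ * (X * S' * T) = X * W * T := by group
  rwa [heq] at this

theorem mem_replace {γ : Type} {Rs : Set (FreeGroup γ)} (X W S' T : FreeGroup γ)
    (hD : W * S'⁻¹ ∈ Subgroup.normalClosure Rs)
    (h : X * W * T ∈ Subgroup.normalClosure Rs) :
    X * S' * T ∈ Subgroup.normalClosure Rs := by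
  have heq : X * S' * T = (X * (W * S'⁻¹)⁻¹ * X⁻¹) * (X * W * T) := by group
  rw [heq]
  exact Subgroup.mul_mem _
    (Subgroup.normalClosure_normal.conj_mem _ (Subgroup.inv_mem _ hD) _) h


section Setup

variable {A₁ A₂ C : Type} (R₁ : Set (FreeGroup A₁)) (R₂ : Set (FreeGroup A₂))
  (ψ₁ : C → A₁) (ψ₂ : C → A₂)

/-- The map from the free group on `C` to `G₁`. -/
def h₁ : FreeGroup C →* PresentedGroup R₁ :=
  FreeGroup.lift fun c => PresentedGroup.of (ψ₁ c)

def h₂ : FreeGroup C →* PresentedGroup R₂ :=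
  FreeGroup.lift fun c => PresentedGroup.of (ψ₂ c)

/-- The edge group `H`. -/
abbrev HH : Type := FreeGroup C ⧸ (h₁ R₁ ψ₁).ker

def φ₁ : HH R₁ ψ₁ →* PresentedGroup R₁ := QuotientGroup.kerLift (h₁ R₁ ψ₁)

variable (hcompat : ∀ w : FreeGroup C, h₁ R₁ ψ₁ w = 1 ↔ h₂ R₂ ψ₂ w = 1)

def φ₂ : HH R₁ ψ₁ →* PresentedGroup R₂ :=
  QuotientGroup.lift _ (h₂ R₂ ψ₂) (fun x hx => (hcompat x).1 hx)

theorem φ₂_mk (z : FreeGroup C) :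
    φ₂ R₁ R₂ ψ₁ ψ₂ hcompat (QuotientGroup.mk z) = h₂ R₂ ψ₂ z := rfl

theorem φ₁_mk (z : FreeGroup C) :
    φ₁ R₁ ψ₁ (QuotientGroup.mk z) = h₁ R₁ ψ₁ z := rfl

theorem φ₁_injective : Function.Injective (φ₁ R₁ ψ₁) :=
  QuotientGroup.kerLift_injective _

theorem φ₂_injective : Function.Injective (φ₂ R₁ R₂ ψ₁ ψ₂ hcompat) := by
  rw [injective_iff_map_eq_one]
  intro x hx
  induction x using QuotientGroup.induction_on with
  | H z =>
    have : h₂ R₂ ψ₂ z = 1 := hx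
    have hz : h₁ R₁ ψ₁ z = 1 := (hcompat z).2 this
    exact (QuotientGroup.eq_one_iff z).2 hz

/-- The family of vertex groups indexed by `Bool`. -/
def Gfam : Bool → Type := fun b => match b with
  | true => PresentedGroup R₁
  | false => PresentedGroup R₂

instance : ∀ b, Group (Gfam R₁ R₂ b) := fun b => match b with
  | true => inferInstanceAs (Group (PresentedGroup R₁))
  | false => inferInstanceAs (Group (PresentedGroup R₂))

def φfam : ∀ b, HH R₁ ψ₁ →* Gfam R₁ R₂ b := fun b => match b with
  | true => φ₁ R₁ ψ₁
  | false => φ₂ R₁ R₂ ψ₁ ψ₂ hcompat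

theorem φfam_injective : ∀ b, Function.Injective (φfam R₁ R₂ ψ₁ ψ₂ hcompat b)
  | true => φ₁_injective R₁ ψ₁
  | false => φ₂_injective R₁ R₂ ψ₁ ψ₂ hcompat

/-- The amalgamated product. -/
def Amal : Type := PushoutI (φfam R₁ R₂ ψ₁ ψ₂ hcompat)

instance : Group (Amal R₁ R₂ ψ₁ ψ₂ hcompat) :=
  inferInstanceAs (Group (PushoutI _))

/-- The projection from the free group on `A₁ ⊕ A₂` to the amalgam. -/
def Pi : FreeGroup (A₁ ⊕ A₂) →* Amal R₁ R₂ ψ₁ ψ₂ hcompat :=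
  FreeGroup.lift fun x => match x with
    | .inl a => PushoutI.of (φ := φfam R₁ R₂ ψ₁ ψ₂ hcompat) true (PresentedGroup.of a)
    | .inr a => PushoutI.of (φ := φfam R₁ R₂ ψ₁ ψ₂ hcompat) false (PresentedGroup.of a)

theorem Pi_map_inl (x : FreeGroup A₁) :
    Pi R₁ R₂ ψ₁ ψ₂ hcompat (FreeGroup.map Sum.inl x) =
      PushoutI.of (φ := φfam R₁ R₂ ψ₁ ψ₂ hcompat) true (PresentedGroup.mk R₁ x) := by
  have : (Pi R₁ R₂ ψ₁ ψ₂ hcompat).comp (FreeGroup.map Sum.inl) =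
      (PushoutI.of (φ := φfam R₁ R₂ ψ₁ ψ₂ hcompat) true).comp (PresentedGroup.mk R₁) := by
    apply FreeGroup.ext_hom
    intro a
    simp only [MonoidHom.comp_apply, FreeGroup.map.of]
    rfl
  exact DFunLike.congr_fun this x

theorem Pi_map_inr (x : FreeGroup A₂) :
    Pi R₁ R₂ ψ₁ ψ₂ hcompat (FreeGroup.map Sum.inr x) =
      PushoutI.of (φ := φfam R₁ R₂ ψ₁ ψ₂ hcompat) false (PresentedGroup.mk R₂ x) := by
  have : (Pi R₁ R₂ ψ₁ ψ₂ hcompat).comp (FreeGroup.map Sum.inr) =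
      (PushoutI.of (φ := φfam R₁ R₂ ψ₁ ψ₂ hcompat) false).comp (PresentedGroup.mk R₂) := by
    apply FreeGroup.ext_hom
    intro a
    simp only [MonoidHom.comp_apply, FreeGroup.map.of]
    rfl
  exact DFunLike.congr_fun this x

/-- The relator set of the amalgam presentation. -/
def bigR : Set (FreeGroup (A₁ ⊕ A₂)) :=
  ((⇑(FreeGroup.map (Sum.inl : A₁ → A₁ ⊕ A₂)) '' R₁) ∪
   (⇑(FreeGroup.map (Sum.inr : A₂ → A₁ ⊕ A₂)) '' R₂) ∪
   (Set.range fun c : C =>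
     FreeGroup.of (Sum.inl (ψ₁ c)) * (FreeGroup.of (Sum.inr (ψ₂ c)))⁻¹))

theorem Pi_eq_one_of_mem (x : FreeGroup (A₁ ⊕ A₂))
    (hx : x ∈ Subgroup.normalClosure (bigR R₁ R₂ ψ₁ ψ₂)) :
    Pi R₁ R₂ ψ₁ ψ₂ hcompat x = 1 := by
  have hR : bigR R₁ R₂ ψ₁ ψ₂ ⊆ (Pi R₁ R₂ ψ₁ ψ₂ hcompat).ker := by
    rintro r ((⟨r₁, hr₁, rfl⟩ | ⟨r₂, hr₂, rfl⟩) | ⟨c, rfl⟩)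
    · show Pi R₁ R₂ ψ₁ ψ₂ hcompat (FreeGroup.map Sum.inl r₁) = 1
      rw [Pi_map_inl]
      have : PresentedGroup.mk R₁ r₁ = 1 :=
        (QuotientGroup.eq_one_iff r₁).2 (Subgroup.subset_normalClosure hr₁)
      rw [this]; exact map_one _
    · show Pi R₁ R₂ ψ₁ ψ₂ hcompat (FreeGroup.map Sum.inr r₂) = 1
      rw [Pi_map_inr]
      have : PresentedGroup.mk R₂ r₂ = 1 :=
        (QuotientGroup.eq_one_iff r₂).2 (Subgroup.subset_normalClosure hr₂)
      rw [this]; exact map_one _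
    · show Pi R₁ R₂ ψ₁ ψ₂ hcompat
        (FreeGroup.of (Sum.inl (ψ₁ c)) * (FreeGroup.of (Sum.inr (ψ₂ c)))⁻¹) = 1
      rw [map_mul, map_inv]
      have e1 : Pi R₁ R₂ ψ₁ ψ₂ hcompat (FreeGroup.of (Sum.inl (ψ₁ c))) =
          PushoutI.of (φ := φfam R₁ R₂ ψ₁ ψ₂ hcompat) true (PresentedGroup.of (ψ₁ c)) :=
        FreeGroup.lift_apply_of
      have e2 : Pi R₁ R₂ ψ₁ ψ₂ hcompat (FreeGroup.of (Sum.inr (ψ₂ c))) =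
          PushoutI.of (φ := φfam R₁ R₂ ψ₁ ψ₂ hcompat) false (PresentedGroup.of (ψ₂ c)) :=
        FreeGroup.lift_apply_of
      rw [e1, e2]
      have k1 : (PresentedGroup.of (ψ₁ c) : PresentedGroup R₁) =
          φfam R₁ R₂ ψ₁ ψ₂ hcompat true (QuotientGroup.mk (FreeGroup.of c)) := by
        show _ = φ₁ R₁ ψ₁ (QuotientGroup.mk (FreeGroup.of c))
        rw [φ₁_mk]
        simp [h₁]
      have k2 : (PresentedGroup.of (ψ₂ c) : PresentedGroup R₂) =
          φfam R₁ R₂ ψ₁ ψ₂ hcompat false (QuotientGroup.mk (FreeGroup.of c)) := by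
        show _ = φ₂ R₁ R₂ ψ₁ ψ₂ hcompat (QuotientGroup.mk (FreeGroup.of c))
        rw [φ₂_mk]
        simp [h₂]
      rw [k1, k2, PushoutI.of_apply_eq_base, PushoutI.of_apply_eq_base]
      exact mul_inv_cancel _
  have := Subgroup.normalClosure_le_normal hR hx
  exact this



/-- Product of a list of letters in the pushout. -/
def prodPush (l : List (Σ b, Gfam R₁ R₂ b)) : Amal R₁ R₂ ψ₁ ψ₂ hcompat :=
  (l.map fun x => PushoutI.of (φ := φfam R₁ R₂ ψ₁ ψ₂ hcompat) x.1 x.2).prod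

/-- Britton's lemma for the amalgam: an alternating product which is trivial has a letter
in the image of the edge group. -/
theorem britton (l : List (Σ b, Gfam R₁ R₂ b))
    (hchain : l.IsChain fun x y => x.1 ≠ y.1)
    (hprod : prodPush R₁ R₂ ψ₁ ψ₂ hcompat l = 1) :
    l = [] ∨ ∃ x ∈ l, x.2 ∈ (φfam R₁ R₂ ψ₁ ψ₂ hcompat x.1).range := by
  by_cases hex : ∃ x ∈ l, x.2 ∈ (φfam R₁ R₂ ψ₁ ψ₂ hcompat x.1).range
  · exact Or.inr hex
  push_neg at hex
  left
  have hne : ∀ x ∈ l, Sigma.snd x ≠ 1 := by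
    intro x hx h1
    exact hex x hx (h1 ▸ ⟨1, map_one _⟩)
  set w : CoprodI.Word (Gfam R₁ R₂) := ⟨l, hne, hchain⟩ with hw
  have hred : PushoutI.Reduced (φfam R₁ R₂ ψ₁ ψ₂ hcompat) w := fun g hg => hex g hg
  have hprod' : PushoutI.ofCoprodI (φ := φfam R₁ R₂ ψ₁ ψ₂ hcompat) w.prod ∈
      (PushoutI.base (φfam R₁ R₂ ψ₁ ψ₂ hcompat)).range := by
    have : PushoutI.ofCoprodI (φ := φfam R₁ R₂ ψ₁ ψ₂ hcompat) w.prod =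
        prodPush R₁ R₂ ψ₁ ψ₂ hcompat l := by
      show PushoutI.ofCoprodI (List.prod (l.map fun x => CoprodI.of x.snd)) = _
      rw [map_list_prod, prodPush, List.map_map]
      congr 1
    rw [this, hprod]
    exact ⟨1, map_one _⟩
  have := PushoutI.Reduced.eq_empty_of_mem_range
    (φfam_injective R₁ R₂ ψ₁ ψ₂ hcompat) hred hprod'
  have : w.toList = [] := by rw [this]; rfl
  exact this

theorem range_φ₁ : (φ₁ R₁ ψ₁ : HH R₁ ψ₁ →* PresentedGroup R₁).range =
    Subgroup.closure (Set.range fun c => (PresentedGroup.of (ψ₁ c) : PresentedGroup R₁)) := by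
  have : (φ₁ R₁ ψ₁).range = (h₁ R₁ ψ₁).range := by
    ext y
    constructor
    · rintro ⟨x, rfl⟩
      induction x using QuotientGroup.induction_on with
      | H z => exact ⟨z, rfl⟩
    · rintro ⟨z, rfl⟩
      exact ⟨QuotientGroup.mk z, rfl⟩
  rw [this, h₁, FreeGroup.range_lift_eq_closure]

theorem range_φ₂ : (φ₂ R₁ R₂ ψ₁ ψ₂ hcompat).range =
    Subgroup.closure (Set.range fun c => (PresentedGroup.of (ψ₂ c) : PresentedGroup R₂)) := by
  have : (φ₂ R₁ R₂ ψ₁ ψ₂ hcompat).range = (h₂ R₂ ψ₂).range := by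
    ext y
    constructor
    · rintro ⟨x, rfl⟩
      induction x using QuotientGroup.induction_on with
      | H z => exact ⟨z, rfl⟩
    · rintro ⟨z, rfl⟩
      exact ⟨QuotientGroup.mk z, rfl⟩
  rw [this, h₂, FreeGroup.range_lift_eq_closure]

/-- The value of a chunk in its vertex group. -/
def chunkVal : (x : Bool × List ((A₁ ⊕ A₂) × Bool)) → Gfam R₁ R₂ x.1 := fun x =>
  match x with
  | (true, s) => (PresentedGroup.mk R₁ (FreeGroup.mk (extrL s)) : PresentedGroup R₁)
  | (false, s) => (PresentedGroup.mk R₂ (FreeGroup.mk (extrR s)) : PresentedGroup R₂)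

/-- The chunk as a letter of the coproduct. -/
def elemC (x : Bool × List ((A₁ ⊕ A₂) × Bool)) : Σ b, Gfam R₁ R₂ b :=
  ⟨x.1, chunkVal R₁ R₂ x⟩

@[simp] theorem elemC_fst (x : Bool × List ((A₁ ⊕ A₂) × Bool)) :
    (elemC R₁ R₂ x).1 = x.1 := rfl

theorem Pi_mk_chunk (x : Bool × List ((A₁ ⊕ A₂) × Bool)) (h : OnSide x.1 x.2) :
    Pi R₁ R₂ ψ₁ ψ₂ hcompat (FreeGroup.mk x.2) =
      PushoutI.of (φ := φfam R₁ R₂ ψ₁ ψ₂ hcompat) x.1 (chunkVal R₁ R₂ x) := by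
  rcases x with ⟨b, s⟩
  cases b
  · show Pi R₁ R₂ ψ₁ ψ₂ hcompat (FreeGroup.mk s) =
      PushoutI.of (φ := φfam R₁ R₂ ψ₁ ψ₂ hcompat) false
        (PresentedGroup.mk R₂ (FreeGroup.mk (extrR s)))
    rw [← mk_extrR h, Pi_map_inr]
  · show Pi R₁ R₂ ψ₁ ψ₂ hcompat (FreeGroup.mk s) =
      PushoutI.of (φ := φfam R₁ R₂ ψ₁ ψ₂ hcompat) true
        (PresentedGroup.mk R₁ (FreeGroup.mk (extrL s)))
    rw [← mk_extrL h, Pi_map_inl]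

theorem Pi_Jn (ss : List (Bool × List ((A₁ ⊕ A₂) × Bool)))
    (h : ∀ x ∈ ss, OnSide x.1 x.2) :
    Pi R₁ R₂ ψ₁ ψ₂ hcompat (FreeGroup.mk (Jn ss)) =
      prodPush R₁ R₂ ψ₁ ψ₂ hcompat (ss.map (elemC R₁ R₂)) := by
  induction ss with
  | nil => rfl
  | cons x ss ih =>
    have hx := h x (List.mem_cons_self)
    have hss := fun z hz => h z (List.mem_cons_of_mem _ hz)
    rw [Jn_cons, ← FreeGroup.mul_mk, map_mul, ih hss, Pi_mk_chunk R₁ R₂ ψ₁ ψ₂ hcompat x hx]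
    show _ = (List.map _ (elemC R₁ R₂ x :: List.map (elemC R₁ R₂) ss)).prod
    rfl

theorem mk_single_true {α : Type} (x : α) :
    FreeGroup.mk [(x, true)] = FreeGroup.of x := rfl

theorem mk_single_false {α : Type} (x : α) :
    FreeGroup.mk [(x, false)] = (FreeGroup.of x)⁻¹ := by
  rw [show ((FreeGroup.of x)⁻¹ : FreeGroup α) =
    FreeGroup.mk (FreeGroup.invRev [(x, true)]) from (FreeGroup.inv_mk).symm]
  rfl

theorem mem_bigR_inl {r : FreeGroup A₁} (hr : r ∈ R₁) :
    FreeGroup.map Sum.inl r ∈ bigR R₁ R₂ ψ₁ ψ₂ :=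
  Or.inl (Or.inl ⟨r, hr, rfl⟩)

theorem mem_bigR_inr {r : FreeGroup A₂} (hr : r ∈ R₂) :
    FreeGroup.map Sum.inr r ∈ bigR R₁ R₂ ψ₁ ψ₂ :=
  Or.inl (Or.inr ⟨r, hr, rfl⟩)

theorem mem_bigR_edge (c : C) :
    FreeGroup.of (Sum.inl (ψ₁ c)) * (FreeGroup.of (Sum.inr (ψ₂ c)))⁻¹ ∈ bigR R₁ R₂ ψ₁ ψ₂ :=
  Or.inr ⟨c, rfl⟩

/-- The left- and right-hand images of a `C`-word in the free group on `A₁ ⊕ A₂`. -/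
def uInl (u : List (C × Bool)) : List ((A₁ ⊕ A₂) × Bool) :=
  u.map fun q => (Sum.inl (ψ₁ q.1), q.2)

def uInr (u : List (C × Bool)) : List ((A₁ ⊕ A₂) × Bool) :=
  u.map fun q => (Sum.inr (ψ₂ q.1), q.2)

theorem edge_single (c : C) (b : Bool) :
    AreaLe (bigR R₁ R₂ ψ₁ ψ₂) 1
      (FreeGroup.mk [((Sum.inl (ψ₁ c) : A₁ ⊕ A₂), b)] *
        (FreeGroup.mk [((Sum.inr (ψ₂ c) : A₁ ⊕ A₂), b)])⁻¹) := by
  set L : FreeGroup (A₁ ⊕ A₂) := FreeGroup.of (Sum.inl (ψ₁ c))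
  set Rr : FreeGroup (A₁ ⊕ A₂) := FreeGroup.of (Sum.inr (ψ₂ c))
  cases b
  · refine ⟨[L⁻¹ * (L * Rr⁻¹)⁻¹ * L], by simp, ?_, ?_⟩
    · intro x hx
      rw [List.mem_singleton] at hx
      subst hx
      exact ⟨L * Rr⁻¹, mem_bigR_edge R₁ R₂ ψ₁ ψ₂ c, L, Or.inr rfl⟩
    · rw [List.prod_singleton, mk_single_false, mk_single_false]
      group
      rfl
  · refine ⟨[L * Rr⁻¹], by simp, ?_, ?_⟩
    · intro x hx
      rw [List.mem_singleton] at hx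
      subst hx
      exact ⟨L * Rr⁻¹, mem_bigR_edge R₁ R₂ ψ₁ ψ₂ c, 1, Or.inl (by group)⟩
    · rw [List.prod_singleton, mk_single_true, mk_single_true]

theorem edge_area (u : List (C × Bool)) :
    AreaLe (bigR R₁ R₂ ψ₁ ψ₂) u.length
      (FreeGroup.mk (uInl ψ₁ u) * (FreeGroup.mk (uInr ψ₂ u))⁻¹) := by
  induction u with
  | nil =>
    have : (FreeGroup.mk (uInl ψ₁ ([] : List (C × Bool))) *
        (FreeGroup.mk (uInr ψ₂ ([] : List (C × Bool))))⁻¹ : FreeGroup (A₁ ⊕ A₂)) = 1 := by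
      show (FreeGroup.mk [] * (FreeGroup.mk [])⁻¹ : FreeGroup (A₁ ⊕ A₂)) = 1
      rw [← FreeGroup.one_eq_mk]
      group
    rw [this]
    exact areaLe_one
  | cons q u ih =>
    rcases q with ⟨c, b⟩
    set a₁ : FreeGroup (A₁ ⊕ A₂) := FreeGroup.mk [((Sum.inl (ψ₁ c) : A₁ ⊕ A₂), b)]
    set a₂ : FreeGroup (A₁ ⊕ A₂) := FreeGroup.mk [((Sum.inr (ψ₂ c) : A₁ ⊕ A₂), b)]
    have h1 : FreeGroup.mk (uInl ψ₁ ((c, b) :: u)) = a₁ * FreeGroup.mk (uInl ψ₁ u) := by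
      rw [FreeGroup.mul_mk]; rfl
    have h2 : FreeGroup.mk (uInr ψ₂ ((c, b) :: u)) = a₂ * FreeGroup.mk (uInr ψ₂ u) := by
      rw [FreeGroup.mul_mk]; rfl
    have key : FreeGroup.mk (uInl ψ₁ ((c, b) :: u)) * (FreeGroup.mk (uInr ψ₂ ((c, b) :: u)))⁻¹ =
        (a₁ * (FreeGroup.mk (uInl ψ₁ u) * (FreeGroup.mk (uInr ψ₂ u))⁻¹) * a₁⁻¹) *
          (a₁ * a₂⁻¹) := by
      rw [h1, h2]
      group
    rw [key]
    have step := (ih.conj a₁).mul (edge_single R₁ R₂ ψ₁ ψ₂ c b)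
    exact step

/-- Convert a list of generators-or-inverses into a `C`-word. -/
theorem listToWord {G : Type*} [Group G] (p : C → G) (l : List G)
    (hl : ∀ y ∈ l, y ∈ Set.range p ∨ y⁻¹ ∈ Set.range p) :
    ∃ u : List (C × Bool), u.length = l.length ∧
      (u.map fun q => cond q.2 (p q.1) (p q.1)⁻¹).prod = l.prod := by
  induction l with
  | nil => exact ⟨[], rfl, rfl⟩
  | cons y l ih =>
    obtain ⟨u, hu1, hu2⟩ := ih fun z hz => hl z (List.mem_cons_of_mem _ hz)
    rcases hl y (List.mem_cons_self) with ⟨c, hc⟩ | ⟨c, hc⟩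
    · exact ⟨(c, true) :: u, by simp [hu1], by simp [hc, hu2]⟩
    · refine ⟨(c, false) :: u, by simp [hu1], ?_⟩
      have : (p c)⁻¹ = y := by rw [hc, inv_inv]
      simp [this, hu2]

theorem wordLength_hom_mk_le {α : Type} {G : Type} [Group G] (F : FreeGroup α →* G)
    (v : List (α × Bool)) :
    wordLength (Set.range fun a => F (FreeGroup.of a)) (F (FreeGroup.mk v)) ≤ v.length := by
  have := wordLength_le (S := Set.range fun a => F (FreeGroup.of a))
    (l := v.map fun x => cond x.2 (F (FreeGroup.of x.1)) (F (FreeGroup.of x.1))⁻¹)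
    (x := F (FreeGroup.mk v)) ?_ ?_
  · simpa using this
  · intro y hy
    simp only [List.mem_map] at hy
    obtain ⟨⟨a, b⟩, _, rfl⟩ := hy
    cases b
    · exact Or.inr (by simp)
    · exact Or.inl ⟨a, rfl⟩
  · exact (hom_mk_eq_prod F v).symm

section Steps

variable (hiso₁ : ∀ h ∈ Subgroup.closure
      (Set.range fun c => (PresentedGroup.of (ψ₁ c) : PresentedGroup R₁)),
    wordLength (Set.range fun c => (PresentedGroup.of (ψ₁ c) : PresentedGroup R₁)) h =
    wordLength (Set.range fun a : A₁ => (PresentedGroup.of a : PresentedGroup R₁)) h)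
  (hiso₂ : ∀ h ∈ Subgroup.closure
      (Set.range fun c => (PresentedGroup.of (ψ₂ c) : PresentedGroup R₂)),
    wordLength (Set.range fun c => (PresentedGroup.of (ψ₂ c) : PresentedGroup R₂)) h =
    wordLength (Set.range fun a : A₂ => (PresentedGroup.of a : PresentedGroup R₂)) h)
  (f₁ f₂ : ℕ → ℕ) (hf₁ : IsDehnBound R₁ f₁) (hf₂ : IsDehnBound R₂ f₂)

include hiso₁ hf₁ in
/-- Surgery on a left-sided chunk whose value lies in the edge group: it can be replaced
by a right-sided word at controlled cost. -/
theorem step1 (n : ℕ) (s : List ((A₁ ⊕ A₂) × Bool)) (hs : OnSide true s)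
    (hlen : s.length ≤ n)
    (hg : PresentedGroup.mk R₁ (FreeGroup.mk (extrL s)) ∈ (φ₁ R₁ ψ₁).range) :
    ∃ s' : List ((A₁ ⊕ A₂) × Bool), OnSide false s' ∧ s'.length ≤ s.length ∧
      AreaLe (bigR R₁ R₂ ψ₁ ψ₂) (env f₁ (2 * n) + n)
        (FreeGroup.mk s * (FreeGroup.mk s')⁻¹) := by
  classical
  set v := extrL s with hv
  have hvlen : v.length = s.length := (extrL_spec hs).2
  set g : PresentedGroup R₁ := PresentedGroup.mk R₁ (FreeGroup.mk v) with hgdef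
  have hgc : g ∈ Subgroup.closure
      (Set.range fun c => (PresentedGroup.of (ψ₁ c) : PresentedGroup R₁)) := by
    rw [← range_φ₁ R₁ ψ₁]
    exact hg
  -- word length bound
  have hub : wordLength (Set.range fun a : A₁ => (PresentedGroup.of a : PresentedGroup R₁)) g ≤
      v.length := wordLength_hom_mk_le (PresentedGroup.mk R₁) v
  have hwl : wordLength (Set.range fun c => (PresentedGroup.of (ψ₁ c) : PresentedGroup R₁)) g ≤
      v.length := by
    rw [hiso₁ g hgc]
    exact hub
  obtain ⟨l, hl_len, hl_mem, hl_prod⟩ := exists_list_length_wordLength hgc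
  have hllen : l.length ≤ v.length := hl_len ▸ hwl
  obtain ⟨u, hu_len, hu_prod⟩ :=
    listToWord (fun c => (PresentedGroup.of (ψ₁ c) : PresentedGroup R₁)) l hl_mem
  have hulen : u.length ≤ v.length := hu_len ▸ hllen
  -- the A₁-word spelled by u
  set uw : List (A₁ × Bool) := u.map fun q => (ψ₁ q.1, q.2) with huw
  have huwmk : PresentedGroup.mk R₁ (FreeGroup.mk uw) = g := by
    rw [hom_mk_eq_prod (PresentedGroup.mk R₁) uw, huw, List.map_map]
    rw [show ((fun x : A₁ × Bool => cond x.2 (PresentedGroup.mk R₁ (FreeGroup.of x.1))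
        (PresentedGroup.mk R₁ (FreeGroup.of x.1))⁻¹) ∘ fun q : C × Bool => (ψ₁ q.1, q.2)) =
        fun q : C × Bool => cond q.2 ((PresentedGroup.of (ψ₁ q.1) : PresentedGroup R₁))
          (PresentedGroup.of (ψ₁ q.1))⁻¹ from rfl]
    rw [hu_prod, hl_prod]
  -- the relation in G₁
  have hker : FreeGroup.mk v * (FreeGroup.mk uw)⁻¹ ∈ Subgroup.normalClosure R₁ := by
    rw [← QuotientGroup.eq_one_iff (N := Subgroup.normalClosure R₁)]
    show PresentedGroup.mk R₁ (FreeGroup.mk v * (FreeGroup.mk uw)⁻¹) = 1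
    rw [map_mul, map_inv, huwmk, ← hgdef, mul_inv_cancel]
  have hword : FreeGroup.mk (v ++ FreeGroup.invRev uw) =
      FreeGroup.mk v * (FreeGroup.mk uw)⁻¹ := by
    rw [← FreeGroup.mul_mk, FreeGroup.inv_mk]
  have harea₁ : AreaLe R₁ (f₁ (v ++ FreeGroup.invRev uw).length)
      (FreeGroup.mk v * (FreeGroup.mk uw)⁻¹) := by
    obtain ⟨l', h1, h2, h3⟩ := hf₁ (v ++ FreeGroup.invRev uw) (hword ▸ hker)
    exact ⟨l', h1, h2, h3.trans hword⟩
  have hlen2 : (v ++ FreeGroup.invRev uw).length ≤ 2 * n := by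
    rw [List.length_append, FreeGroup.invRev_length]
    have : uw.length = u.length := by simp [huw]
    omega
  have harea₁' : AreaLe R₁ (env f₁ (2 * n)) (FreeGroup.mk v * (FreeGroup.mk uw)⁻¹) :=
    harea₁.mono (le_env f₁ hlen2)
  -- push into the big free group
  have hpush : AreaLe (bigR R₁ R₂ ψ₁ ψ₂) (env f₁ (2 * n))
      (FreeGroup.map Sum.inl (FreeGroup.mk v * (FreeGroup.mk uw)⁻¹)) :=
    harea₁'.map (FreeGroup.map Sum.inl) (fun r hr => mem_bigR_inl R₁ R₂ ψ₁ ψ₂ hr)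
  -- identify the image
  have himg : FreeGroup.map Sum.inl (FreeGroup.mk v * (FreeGroup.mk uw)⁻¹) =
      FreeGroup.mk s * (FreeGroup.mk (uInl ψ₁ u))⁻¹ := by
    rw [map_mul, map_inv, mk_extrL hs]
    congr 2
    rw [FreeGroup.map.mk]
    congr 1
    simp [huw, uInl]
  -- the edge conversion
  have hedge := edge_area R₁ R₂ ψ₁ ψ₂ u
  refine ⟨uInr ψ₂ u, ?_, ?_, ?_⟩
  · intro p hp
    simp only [uInr, List.mem_map] at hp
    obtain ⟨q, _, rfl⟩ := hp
    rfl
  · rw [show (uInr ψ₂ u).length = u.length by simp [uInr]]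
    omega
  · have comb := hpush.mul hedge
    rw [himg] at comb
    have : FreeGroup.mk s * (FreeGroup.mk (uInl ψ₁ u))⁻¹ *
        (FreeGroup.mk (uInl ψ₁ u) * (FreeGroup.mk (uInr ψ₂ u))⁻¹) =
        FreeGroup.mk s * (FreeGroup.mk (uInr ψ₂ u))⁻¹ := by group
    rw [this] at comb
    exact comb.mono (by omega)

include hiso₂ hf₂ in
/-- Surgery on a right-sided chunk. -/
theorem step2 (n : ℕ) (s : List ((A₁ ⊕ A₂) × Bool)) (hs : OnSide false s)
    (hlen : s.length ≤ n)
    (hg : PresentedGroup.mk R₂ (FreeGroup.mk (extrR s)) ∈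
      (φ₂ R₁ R₂ ψ₁ ψ₂ hcompat).range) :
    ∃ s' : List ((A₁ ⊕ A₂) × Bool), OnSide true s' ∧ s'.length ≤ s.length ∧
      AreaLe (bigR R₁ R₂ ψ₁ ψ₂) (env f₂ (2 * n) + n)
        (FreeGroup.mk s * (FreeGroup.mk s')⁻¹) := by
  classical
  set v := extrR s with hv
  have hvlen : v.length = s.length := (extrR_spec hs).2
  set g : PresentedGroup R₂ := PresentedGroup.mk R₂ (FreeGroup.mk v) with hgdef
  have hgc : g ∈ Subgroup.closure
      (Set.range fun c => (PresentedGroup.of (ψ₂ c) : PresentedGroup R₂)) := by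
    rw [← range_φ₂ R₁ R₂ ψ₁ ψ₂ hcompat]
    exact hg
  have hub : wordLength (Set.range fun a : A₂ => (PresentedGroup.of a : PresentedGroup R₂)) g ≤
      v.length := wordLength_hom_mk_le (PresentedGroup.mk R₂) v
  have hwl : wordLength (Set.range fun c => (PresentedGroup.of (ψ₂ c) : PresentedGroup R₂)) g ≤
      v.length := by
    rw [hiso₂ g hgc]
    exact hub
  obtain ⟨l, hl_len, hl_mem, hl_prod⟩ := exists_list_length_wordLength hgc
  have hllen : l.length ≤ v.length := hl_len ▸ hwl
  obtain ⟨u, hu_len, hu_prod⟩ :=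
    listToWord (fun c => (PresentedGroup.of (ψ₂ c) : PresentedGroup R₂)) l hl_mem
  have hulen : u.length ≤ v.length := hu_len ▸ hllen
  set uw : List (A₂ × Bool) := u.map fun q => (ψ₂ q.1, q.2) with huw
  have huwmk : PresentedGroup.mk R₂ (FreeGroup.mk uw) = g := by
    rw [hom_mk_eq_prod (PresentedGroup.mk R₂) uw, huw, List.map_map]
    rw [show ((fun x : A₂ × Bool => cond x.2 (PresentedGroup.mk R₂ (FreeGroup.of x.1))
        (PresentedGroup.mk R₂ (FreeGroup.of x.1))⁻¹) ∘ fun q : C × Bool => (ψ₂ q.1, q.2)) =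
        fun q : C × Bool => cond q.2 ((PresentedGroup.of (ψ₂ q.1) : PresentedGroup R₂))
          (PresentedGroup.of (ψ₂ q.1))⁻¹ from rfl]
    rw [hu_prod, hl_prod]
  have hker : FreeGroup.mk v * (FreeGroup.mk uw)⁻¹ ∈ Subgroup.normalClosure R₂ := by
    rw [← QuotientGroup.eq_one_iff (N := Subgroup.normalClosure R₂)]
    show PresentedGroup.mk R₂ (FreeGroup.mk v * (FreeGroup.mk uw)⁻¹) = 1
    rw [map_mul, map_inv, huwmk, ← hgdef, mul_inv_cancel]
  have hword : FreeGroup.mk (v ++ FreeGroup.invRev uw) =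
      FreeGroup.mk v * (FreeGroup.mk uw)⁻¹ := by
    rw [← FreeGroup.mul_mk, FreeGroup.inv_mk]
  have harea₂ : AreaLe R₂ (f₂ (v ++ FreeGroup.invRev uw).length)
      (FreeGroup.mk v * (FreeGroup.mk uw)⁻¹) := by
    obtain ⟨l', h1, h2, h3⟩ := hf₂ (v ++ FreeGroup.invRev uw) (hword ▸ hker)
    exact ⟨l', h1, h2, h3.trans hword⟩
  have hlen2 : (v ++ FreeGroup.invRev uw).length ≤ 2 * n := by
    rw [List.length_append, FreeGroup.invRev_length]
    have : uw.length = u.length := by simp [huw]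
    omega
  have harea₂' : AreaLe R₂ (env f₂ (2 * n)) (FreeGroup.mk v * (FreeGroup.mk uw)⁻¹) :=
    harea₂.mono (le_env f₂ hlen2)
  have hpush : AreaLe (bigR R₁ R₂ ψ₁ ψ₂) (env f₂ (2 * n))
      (FreeGroup.map Sum.inr (FreeGroup.mk v * (FreeGroup.mk uw)⁻¹)) :=
    harea₂'.map (FreeGroup.map Sum.inr) (fun r hr => mem_bigR_inr R₁ R₂ ψ₁ ψ₂ hr)
  have himg : FreeGroup.map Sum.inr (FreeGroup.mk v * (FreeGroup.mk uw)⁻¹) =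
      FreeGroup.mk s * (FreeGroup.mk (uInr ψ₂ u))⁻¹ := by
    rw [map_mul, map_inv, mk_extrR hs]
    congr 2
    rw [FreeGroup.map.mk]
    congr 1
    simp [huw, uInr]
  have hedge := (edge_area R₁ R₂ ψ₁ ψ₂ u).inv
  refine ⟨uInl ψ₁ u, ?_, ?_, ?_⟩
  · intro p hp
    simp only [uInl, List.mem_map] at hp
    obtain ⟨q, _, rfl⟩ := hp
    rfl
  · rw [show (uInl ψ₁ u).length = u.length by simp [uInl]]
    omega
  · have comb := hpush.mul hedge
    rw [himg] at comb
    have : FreeGroup.mk s * (FreeGroup.mk (uInr ψ₂ u))⁻¹ *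
        (FreeGroup.mk (uInl ψ₁ u) * (FreeGroup.mk (uInr ψ₂ u))⁻¹)⁻¹ =
        FreeGroup.mk s * (FreeGroup.mk (uInl ψ₁ u))⁻¹ := by group
    rw [this] at comb
    exact comb.mono (by omega)

/-- The recombination step: replace the chunk `(b, sw)` by `s'` on the opposite side,
merge with a neighbour and recurse. -/
theorem recombine (cost k n m : ℕ)
    (ih : ∀ ss : List (Bool × List ((A₁ ⊕ A₂) × Bool)), ss.length ≤ k →
      (∀ x ∈ ss, OnSide x.1 x.2) → (Jn ss).length ≤ n →
      FreeGroup.mk (Jn ss) ∈ Subgroup.normalClosure (bigR R₁ R₂ ψ₁ ψ₂) →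
      AreaLe (bigR R₁ R₂ ψ₁ ψ₂) ((k + 1) * cost) (FreeGroup.mk (Jn ss)))
    (ts₁ ts₂ : List (Bool × List ((A₁ ⊕ A₂) × Bool))) (b : Bool)
    (sw s' : List ((A₁ ⊕ A₂) × Bool))
    (hfullside : ∀ x ∈ ts₁ ++ (b, sw) :: ts₂, OnSide x.1 x.2)
    (hchain : (ts₁ ++ (b, sw) :: ts₂).IsChain fun p q => p.1 ≠ q.1)
    (hlen2 : 2 ≤ (ts₁ ++ (b, sw) :: ts₂).length)
    (hklen : (ts₁ ++ (b, sw) :: ts₂).length ≤ k + 1)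
    (hJlen : (Jn (ts₁ ++ (b, sw) :: ts₂)).length ≤ n)
    (hmem : FreeGroup.mk (Jn (ts₁ ++ (b, sw) :: ts₂)) ∈
      Subgroup.normalClosure (bigR R₁ R₂ ψ₁ ψ₂))
    (hs'side : OnSide (!b) s') (hs'len : s'.length ≤ sw.length)
    (hD : AreaLe (bigR R₁ R₂ ψ₁ ψ₂) m (FreeGroup.mk sw * (FreeGroup.mk s')⁻¹))
    (hm : m ≤ cost) :
    AreaLe (bigR R₁ R₂ ψ₁ ψ₂) ((k + 2) * cost)
      (FreeGroup.mk (Jn (ts₁ ++ (b, sw) :: ts₂))) := by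
  have hDmem := hD.mem_normalClosure
  rcases ts₂ with _ | ⟨⟨byy, syy⟩, ts₂'⟩
  · -- the replaced chunk is last; merge to the left
    have hne : ts₁ ≠ [] := by
      intro h
      rw [h] at hlen2
      simp at hlen2
    obtain ⟨ts₁', yy, rfl⟩ : ∃ L b, ts₁ = L ++ [b] := by
      rcases ts₁.eq_nil_or_concat' with h | h
      · exact absurd h hne
      · exact h
    rcases yy with ⟨byy, syy⟩
    have hre : (ts₁' ++ [(byy, syy)]) ++ (b, sw) :: [] =
        ts₁' ++ (byy, syy) :: (b, sw) :: [] := by simp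
    rw [hre] at hfullside hchain hklen hJlen hmem ⊢
    have hrel : byy ≠ b := by
      have := (List.isChain_append_cons_cons.mp hchain).2.1
      simpa using this
    have hbyy : byy = !b := by
      cases b <;> cases byy <;> first | rfl | exact absurd rfl hrel
    subst hbyy
    have hsyyside : OnSide (!b) syy :=
      hfullside (!b, syy) (by simp)
    set ss' : List (Bool × List ((A₁ ⊕ A₂) × Bool)) := ts₁' ++ [(!b, syy ++ s')] with hss'
    have e1 : FreeGroup.mk (Jn (ts₁' ++ (!b, syy) :: (b, sw) :: [])) =
        (FreeGroup.mk (Jn ts₁') * FreeGroup.mk syy) * FreeGroup.mk sw * 1 := by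
      simp [Jn_append, ← FreeGroup.mul_mk, mul_assoc, Jn]
    have e2 : FreeGroup.mk (Jn ss') =
        (FreeGroup.mk (Jn ts₁') * FreeGroup.mk syy) * FreeGroup.mk s' * 1 := by
      simp [hss', Jn_append, ← FreeGroup.mul_mk, mul_assoc, Jn]
    have hklen' : ss'.length ≤ k := by
      simp only [hss', List.length_append, List.length_cons, List.length_nil] at hklen ⊢
      simp at hklen ⊢
      omega
    have hside' : ∀ x ∈ ss', OnSide x.1 x.2 := by
      intro x hx
      rcases List.mem_append.1 hx with h | h
      · exact hfullside x (by simp [List.mem_append.1, h])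
      · rw [List.mem_singleton] at h
        subst h
        exact hsyyside.append hs'side
    have hJlen' : (Jn ss').length ≤ n := by
      have l1 : (Jn (ts₁' ++ (!b, syy) :: (b, sw) :: [])).length =
          (Jn ts₁').length + (syy.length + sw.length) := by
        simp [Jn_append, Jn]
      have l2 : (Jn ss').length = (Jn ts₁').length + (syy.length + s'.length) := by
        simp [hss', Jn_append, Jn]
      omega
    have hmem' : FreeGroup.mk (Jn ss') ∈ Subgroup.normalClosure (bigR R₁ R₂ ψ₁ ψ₂) := by
      rw [e2]
      exact mem_replace _ _ _ _ hDmem (e1 ▸ hmem)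
    have hrec := ih ss' hklen' hside' hJlen' hmem'
    rw [e1]
    refine (area_replace _ _ _ _ hD (by rw [← e2]; exact hrec)).mono ?_
    calc m + (k + 1) * cost ≤ cost + (k + 1) * cost := by omega
      _ = (k + 2) * cost := by ring
  · -- merge to the right
    have hrel : b ≠ byy := by
      have := (List.isChain_append_cons_cons.mp hchain).2.1
      simpa using this
    have hbyy : byy = !b := by
      cases b <;> cases byy <;> first | rfl | exact absurd rfl hrel
    subst hbyy
    have hsyyside : OnSide (!b) syy := hfullside (!b, syy) (by simp)
    set ss' : List (Bool × List ((A₁ ⊕ A₂) × Bool)) := ts₁ ++ (!b, s' ++ syy) :: ts₂' with hss'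
    have e1 : FreeGroup.mk (Jn (ts₁ ++ (b, sw) :: (!b, syy) :: ts₂')) =
        FreeGroup.mk (Jn ts₁) * FreeGroup.mk sw *
          (FreeGroup.mk syy * FreeGroup.mk (Jn ts₂')) := by
      simp [Jn_append, ← FreeGroup.mul_mk, mul_assoc, Jn]
    have e2 : FreeGroup.mk (Jn ss') =
        FreeGroup.mk (Jn ts₁) * FreeGroup.mk s' *
          (FreeGroup.mk syy * FreeGroup.mk (Jn ts₂')) := by
      simp [hss', Jn_append, ← FreeGroup.mul_mk, mul_assoc, Jn]
    have hklen' : ss'.length ≤ k := by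
      simp only [hss', List.length_append, List.length_cons] at hklen ⊢
      omega
    have hside' : ∀ x ∈ ss', OnSide x.1 x.2 := by
      intro x hx
      rcases List.mem_append.1 hx with h | h
      · exact hfullside x (List.mem_append.2 (Or.inl h))
      · rcases List.mem_cons.1 h with rfl | h
        · exact hs'side.append hsyyside
        · exact hfullside x (by simp [h])
    have hJlen' : (Jn ss').length ≤ n := by
      have l1 : (Jn (ts₁ ++ (b, sw) :: (!b, syy) :: ts₂')).length =
          (Jn ts₁).length + (sw.length + (syy.length + (Jn ts₂').length)) := by
        simp [Jn_append, Jn]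
      have l2 : (Jn ss').length =
          (Jn ts₁).length + (s'.length + (syy.length + (Jn ts₂').length)) := by
        simp [hss', Jn_append, Jn]
      omega
    have hmem' : FreeGroup.mk (Jn ss') ∈ Subgroup.normalClosure (bigR R₁ R₂ ψ₁ ψ₂) := by
      rw [e2]
      exact mem_replace _ _ _ _ hDmem (e1 ▸ hmem)
    have hrec := ih ss' hklen' hside' hJlen' hmem'
    rw [e1]
    refine (area_replace _ _ _ _ hD (by rw [← e2]; exact hrec)).mono ?_
    calc m + (k + 1) * cost ≤ cost + (k + 1) * cost := by omega
      _ = (k + 2) * cost := by ring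

include hcompat hiso₁ hiso₂ hf₁ hf₂ in
/-- Main induction: any side-decomposed null-homotopic word of length at most `n`
with at most `k` chunks has area at most `(k+1) · cost n`. -/
theorem main_induction (n : ℕ) : ∀ (k : ℕ) (ss : List (Bool × List ((A₁ ⊕ A₂) × Bool))),
    ss.length ≤ k → (∀ x ∈ ss, OnSide x.1 x.2) → (Jn ss).length ≤ n →
    FreeGroup.mk (Jn ss) ∈ Subgroup.normalClosure (bigR R₁ R₂ ψ₁ ψ₂) →
    AreaLe (bigR R₁ R₂ ψ₁ ψ₂) ((k + 1) * (env f₁ (2 * n) + env f₂ (2 * n) + n))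
      (FreeGroup.mk (Jn ss)) := by
  intro k
  induction k with
  | zero =>
    intro ss hk _ _ _
    have : ss = [] := List.length_eq_zero_iff.mp (Nat.le_zero.mp hk)
    subst this
    rw [Jn_nil, ← FreeGroup.one_eq_mk]
    exact areaLe_one.mono (Nat.zero_le _)
  | succ k ih =>
    intro ss hk hside hJlen hmem
    -- normalize
    have hJ := norm_join ss
    have hside' := norm_prop (P := fun b s => OnSide b s) (fun _ _ _ hs ht => OnSide.append hs ht) ss hside
    have hnil' := norm_ne_nil ss
    have hchain' := norm_chain ss
    have hklen' : (norm ss).length ≤ k + 1 := (norm_length ss).trans hk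
    have hJlen' : (Jn (norm ss)).length ≤ n := by rw [hJ]; exact hJlen
    have hmem' : FreeGroup.mk (Jn (norm ss)) ∈
        Subgroup.normalClosure (bigR R₁ R₂ ψ₁ ψ₂) := by rw [hJ]; exact hmem
    suffices h : AreaLe (bigR R₁ R₂ ψ₁ ψ₂)
        ((k + 1 + 1) * (env f₁ (2 * n) + env f₂ (2 * n) + n))
        (FreeGroup.mk (Jn (norm ss))) by
      rw [hJ] at h
      exact h
    clear hJ hk hside hJlen hmem
    rcases hns : norm ss with _ | ⟨x, ts'⟩
    · rw [Jn_nil, ← FreeGroup.one_eq_mk]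
      exact areaLe_one.mono (Nat.zero_le _)
    rw [hns] at hside' hnil' hchain' hklen' hJlen' hmem'
    clear hns
    rcases ts' with _ | ⟨y, ts''⟩
    · -- a single chunk
      have hxside := hside' x (List.mem_cons_self)
      have hJx : Jn [x] = x.2 := by simp [Jn]
      have h1 : Pi R₁ R₂ ψ₁ ψ₂ hcompat (FreeGroup.mk (Jn [x])) = 1 :=
        Pi_eq_one_of_mem R₁ R₂ ψ₁ ψ₂ hcompat _ hmem'
      rw [hJx] at h1
      rw [Pi_mk_chunk R₁ R₂ ψ₁ ψ₂ hcompat x hxside] at h1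
      have hcv : chunkVal R₁ R₂ x = 1 := by
        apply PushoutI.of_injective (φfam_injective R₁ R₂ ψ₁ ψ₂ hcompat) x.1
        rw [h1]; exact (map_one _).symm
      have hxlen : x.2.length ≤ n := by
        rw [hJx] at hJlen'
        exact hJlen'
      rcases x with ⟨bx, sx⟩
      rw [hJx]
      cases bx
      · -- single chunk on the A₂ side
        have hcv' : PresentedGroup.mk R₂ (FreeGroup.mk (extrR sx)) = 1 := hcv
        have hmem₂ : FreeGroup.mk (extrR sx) ∈ Subgroup.normalClosure R₂ :=
          (QuotientGroup.eq_one_iff _).1 hcv'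
        obtain ⟨l', h1', h2', h3'⟩ := hf₂ (extrR sx) hmem₂
        have harea : AreaLe R₂ (f₂ (extrR sx).length) (FreeGroup.mk (extrR sx)) :=
          ⟨l', h1', h2', h3'⟩
        have hpush := harea.map (FreeGroup.map Sum.inr)
          (fun r hr => mem_bigR_inr R₁ R₂ ψ₁ ψ₂ hr)
        rw [mk_extrR hxside] at hpush
        have hbound : f₂ (extrR sx).length ≤ env f₂ (2 * n) := by
          apply le_env
          have hspec : (extrR sx).length = sx.length := (extrR_spec hxside).2
          have hsxlen : sx.length ≤ n := hxlen
          omega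
        refine (hpush.mono hbound).mono ?_
        calc env f₂ (2 * n) ≤ env f₁ (2 * n) + env f₂ (2 * n) + n := by omega
          _ ≤ (k + 1 + 1) * (env f₁ (2 * n) + env f₂ (2 * n) + n) :=
            Nat.le_mul_of_pos_left _ (by omega)
      · have hcv' : PresentedGroup.mk R₁ (FreeGroup.mk (extrL sx)) = 1 := hcv
        have hmem₁ : FreeGroup.mk (extrL sx) ∈ Subgroup.normalClosure R₁ :=
          (QuotientGroup.eq_one_iff _).1 hcv'
        obtain ⟨l', h1', h2', h3'⟩ := hf₁ (extrL sx) hmem₁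
        have harea : AreaLe R₁ (f₁ (extrL sx).length) (FreeGroup.mk (extrL sx)) :=
          ⟨l', h1', h2', h3'⟩
        have hpush := harea.map (FreeGroup.map Sum.inl)
          (fun r hr => mem_bigR_inl R₁ R₂ ψ₁ ψ₂ hr)
        rw [mk_extrL hxside] at hpush
        have hbound : f₁ (extrL sx).length ≤ env f₁ (2 * n) := by
          apply le_env
          have hspec : (extrL sx).length = sx.length := (extrL_spec hxside).2
          have hsxlen : sx.length ≤ n := hxlen
          omega
        refine (hpush.mono hbound).mono ?_
        calc env f₁ (2 * n) ≤ env f₁ (2 * n) + env f₂ (2 * n) + n := by omega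
          _ ≤ (k + 1 + 1) * (env f₁ (2 * n) + env f₂ (2 * n) + n) :=
            Nat.le_mul_of_pos_left _ (by omega)
    · -- at least two chunks
      have hPi1 : Pi R₁ R₂ ψ₁ ψ₂ hcompat (FreeGroup.mk (Jn (x :: y :: ts''))) = 1 :=
        Pi_eq_one_of_mem R₁ R₂ ψ₁ ψ₂ hcompat _ hmem'
      have hprod : prodPush R₁ R₂ ψ₁ ψ₂ hcompat
          ((x :: y :: ts'').map (elemC R₁ R₂)) = 1 := by
        rw [← Pi_Jn R₁ R₂ ψ₁ ψ₂ hcompat _ hside']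
        exact hPi1
      have hch : (((x :: y :: ts'').map (elemC R₁ R₂)).IsChain fun a b => a.1 ≠ b.1) := by
        rw [List.isChain_map]
        exact hchain'
      rcases britton R₁ R₂ ψ₁ ψ₂ hcompat _ hch hprod with hnil | ⟨z, hz, hzr⟩
      · simp at hnil
      obtain ⟨w, hw, rfl⟩ := List.mem_map.1 hz
      have hwside := hside' w hw
      obtain ⟨ts₁, ts₂, hsplit⟩ := List.append_of_mem hw
      rw [hsplit] at hside' hchain' hklen' hJlen' hmem' ⊢
      have hl2 : 2 ≤ (ts₁ ++ w :: ts₂).length := by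
        rw [← hsplit]
        simp
      have hwlen : w.2.length ≤ n := by
        have : (Jn (ts₁ ++ w :: ts₂)).length =
            (Jn ts₁).length + (w.2.length + (Jn ts₂).length) := by
          simp [Jn_append, Jn]
        omega
      rcases w with ⟨bw, sw⟩
      cases bw
      · -- chunk on the A₂ side
        have hg : PresentedGroup.mk R₂ (FreeGroup.mk (extrR sw)) ∈
            (φ₂ R₁ R₂ ψ₁ ψ₂ hcompat).range := hzr
        obtain ⟨s', hs'side, hs'len, hD⟩ :=
          step2 R₁ R₂ ψ₁ ψ₂ hcompat hiso₂ f₂ hf₂ n sw hwside hwlen hg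
        exact recombine R₁ R₂ ψ₁ ψ₂ (env f₁ (2 * n) + env f₂ (2 * n) + n) k n
          (env f₂ (2 * n) + n) ih ts₁ ts₂ false sw s' hside' hchain' hl2 hklen'
          hJlen' hmem' hs'side hs'len hD (by omega)
      · have hg : PresentedGroup.mk R₁ (FreeGroup.mk (extrL sw)) ∈
            (φ₁ R₁ ψ₁).range := hzr
        obtain ⟨s', hs'side, hs'len, hD⟩ :=
          step1 R₁ R₂ ψ₁ ψ₂ hiso₁ f₁ hf₁ n sw hwside hwlen hg
        exact recombine R₁ R₂ ψ₁ ψ₂ (env f₁ (2 * n) + env f₂ (2 * n) + n) k n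
          (env f₁ (2 * n) + n) ih ts₁ ts₂ true sw s' hside' hchain' hl2 hklen'
          hJlen' hmem' hs'side hs'len hD (by omega)

end Steps

end Setup

end AmalgamDehn

open AmalgamDehn

/-- If `G₁ = ⟨A₁ ∣ R₁⟩` and `G₂ = ⟨A₂ ∣ R₂⟩` are finitely presented groups with
polynomially bounded Dehn functions, and `G = G₁ ∗_H G₂` is the amalgamated free
product along the finitely generated subgroup `H` generated on each side by the
images of a common alphabet `C ⊆ Aᵢ` (the identification being a well-defined
isomorphism of the two copies of `H`), with `H` isometrically embedded in both
factors, then `G` (with its natural presentation) has a polynomially bounded Dehn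
function. -/
theorem polynomial_dehn_function_of_isometric_amalgam
    (A₁ A₂ C : Type) [Fintype A₁] [Fintype A₂] [Fintype C]
    (R₁ : Set (FreeGroup A₁)) (R₂ : Set (FreeGroup A₂))
    (ψ₁ : C → A₁) (ψ₂ : C → A₂)
    (hψ₁ : Function.Injective ψ₁) (hψ₂ : Function.Injective ψ₂)
    -- the two copies of the edge group are isomorphic via the bijection of
    -- generating sets, i.e. a word in `C` dies in `G₁` iff it dies in `G₂`:
    (hcompat : ∀ w : FreeGroup C,
      FreeGroup.lift (fun c => (PresentedGroup.of (ψ₁ c) : PresentedGroup R₁)) w = 1 ↔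
      FreeGroup.lift (fun c => (PresentedGroup.of (ψ₂ c) : PresentedGroup R₂)) w = 1)
    -- `H` is isometrically embedded in `G₁`:
    (hiso₁ : ∀ h ∈ Subgroup.closure
        (Set.range fun c => (PresentedGroup.of (ψ₁ c) : PresentedGroup R₁)),
      wordLength (Set.range fun c => (PresentedGroup.of (ψ₁ c) : PresentedGroup R₁)) h =
      wordLength (Set.range fun a : A₁ => (PresentedGroup.of a : PresentedGroup R₁)) h)
    -- `H` is isometrically embedded in `G₂`:
    (hiso₂ : ∀ h ∈ Subgroup.closure
        (Set.range fun c => (PresentedGroup.of (ψ₂ c) : PresentedGroup R₂)),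
      wordLength (Set.range fun c => (PresentedGroup.of (ψ₂ c) : PresentedGroup R₂)) h =
      wordLength (Set.range fun a : A₂ => (PresentedGroup.of a : PresentedGroup R₂)) h)
    -- polynomial Dehn bounds for the factors:
    (f₁ f₂ : ℕ → ℕ) (hf₁ : IsDehnBound R₁ f₁) (hf₂ : IsDehnBound R₂ f₂)
    (hpoly₁ : ∃ K d : ℕ, ∀ n, f₁ n ≤ K * n ^ d + K)
    (hpoly₂ : ∃ K d : ℕ, ∀ n, f₂ n ≤ K * n ^ d + K) :
    -- the natural presentation of the amalgam `G₁ ∗_H G₂`: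
    ∃ F : ℕ → ℕ,
      IsDehnBound
        ((⇑(FreeGroup.map (Sum.inl : A₁ → A₁ ⊕ A₂)) '' R₁) ∪
         (⇑(FreeGroup.map (Sum.inr : A₂ → A₁ ⊕ A₂)) '' R₂) ∪
         (Set.range fun c : C =>
           FreeGroup.of (Sum.inl (ψ₁ c)) * (FreeGroup.of (Sum.inr (ψ₂ c)))⁻¹)) F ∧
      ∃ K d : ℕ, ∀ n, F n ≤ K * n ^ d + K := by
  classical
  have hcompat' : ∀ w : FreeGroup C, h₁ R₁ ψ₁ w = 1 ↔ h₂ R₂ ψ₂ w = 1 := hcompat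
  refine ⟨fun n => (n + 1) * (env f₁ (2 * n) + env f₂ (2 * n) + n), ?_, ?_⟩
  · intro w hw
    have hss0 : ∀ v : List ((A₁ ⊕ A₂) × Bool),
        Jn (v.map fun p => (p.1.isLeft, [p])) = v := by
      intro v
      induction v with
      | nil => rfl
      | cons p v ih => simp [Jn] at ih ⊢; exact ih
    have hss := hss0 w
    have hside : ∀ x ∈ (w.map fun p => (p.1.isLeft, [p])), OnSide x.1 x.2 := by
      intro x hx
      simp only [List.mem_map] at hx
      obtain ⟨p, _, rfl⟩ := hx
      intro q hq
      rw [List.mem_singleton] at hq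
      subst hq
      rfl
    have hklen : (w.map fun p => (p.1.isLeft, [p])).length ≤ w.length := by simp
    have hJlen : (Jn (w.map fun p => (p.1.isLeft, [p]))).length ≤ w.length := by
      rw [hss]
    have hmem : FreeGroup.mk (Jn (w.map fun p => (p.1.isLeft, [p]))) ∈
        Subgroup.normalClosure (bigR R₁ R₂ ψ₁ ψ₂) := by
      rw [hss]
      exact hw
    have hmain := main_induction R₁ R₂ ψ₁ ψ₂ hcompat' hiso₁ hiso₂ f₁ f₂ hf₁ hf₂
      w.length w.length _ hklen hside hJlen hmem
    rw [hss] at hmain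
    obtain ⟨l, hl1, hl2, hl3⟩ := hmain
    exact ⟨l, hl1, hl2, hl3⟩
  · have h1 : PolyB (fun n => env f₁ (2 * n)) :=
      PolyB.comp_mul_left 2 (PolyB.env hpoly₁)
    have h2 : PolyB (fun n => env f₂ (2 * n)) :=
      PolyB.comp_mul_left 2 (PolyB.env hpoly₂)
    have hid : PolyB (fun n : ℕ => n) := ⟨1, 1, fun n => by simp⟩
    have hsum : PolyB (fun n => env f₁ (2 * n) + env f₂ (2 * n) + n) :=
      (h1.add h2).add hid
    have hlin : PolyB (fun n : ℕ => n + 1) := hid.add (polyB_const 1)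
    exact hlin.mul hsum
end
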